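/- arXiv:2006.11727 — 4 statements merged into one kernel-verified Lean document; each statement's English description precedes it below -/
import Mathlib

section
/- Let {α_k}_{k=0}^n be arbitrary nonzero real numbers with n ≥ 1. Then there exist b > 0, ζ ∈ ℝ, and a function σ ∈ Z_{1,b} whose restriction to ℝ is real-valued, such that (ζ, {(α_k, 1, k)}_{k=0}^n) is an affine symmetry of σ|_ℝ. -/
/-!
Let `c : ℤ → ℝ` solve the two-sided recurrence `∑ₖ αₖ c (m + k) = 0` with initial window
`c 0 = ⋯ = c (n - 2) = 0`, `c (n - 1) = 1`; since `α₀` and `αₙ` are nonzero it can be solved in both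
directions, and it grows at most like `exp (L |m|)`. For `X = π / b` large enough, `σ(t) = ∑ₘ c m (sgn m + tanh (X (t - m)))`
lies in `Z_{1,b}`, and after reindexing, `∑ₖ αₖ σ(t + k)` is a sum of terms whose `tanh` parts
cancel by the recurrence, hence a constant `ζ`.

Minimality: a relation `μ + ∑_{k ∈ I'} λₖ σ(· + k) = 0` makes the tanh series with coefficients
`d m = ∑ₖ λₖ c (m + k)` constant. Comparing it at `m ± 1/2` shows `|d m|` is at most `4/5` of the
supremum of `|d| e^{-L|·|}` (the jump of the `m`-th term is nearly `2`, the other jumps are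
exponentially small), so `d = 0`. The window shows that every annihilator of `c` is a multiple of
`α`, and `λ` vanishes at an index outside `I'`, so `λ = 0`.
-/

open scoped Classical
noncomputable section

namespace NNPaper

/-- A *nonlinearity*: a continuous function `ℝ → ℝ` that is not affine. -/
def Nonlinearity (ρ : ℝ → ℝ) : Prop :=
  Continuous ρ ∧ ∀ a b : ℝ, ρ ≠ fun t => a * t + b

/-- Linear independence (over `ℝ`) of a set of real-valued functions on `ℝ`. -/
def LinIndepSet (S : Set (ℝ → ℝ)) : Prop :=
  LinearIndependent ℝ (fun g : S => (g : ℝ → ℝ))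

/-- `(ζ, {(α s, β s, γ s)}_{s ∈ I})` is an *affine symmetry* of the nonlinearity `ρ`:
`I` is nonempty, `∑_{s ∈ I} α s • ρ (β s • t + γ s) = ζ` for all `t`, and for no proper
subset `I'` of `I` is the set `{ρ (β s • ⬝ + γ s) : s ∈ I'} ∪ {1}` linearly dependent. -/
def IsAffineSymmetry (ρ : ℝ → ℝ) {ι : Type} (I : Finset ι) (ζ : ℝ) (α β γ : ι → ℝ) : Prop :=
  I.Nonempty ∧
  (∀ t : ℝ, ∑ s ∈ I, α s * ρ (β s * t + γ s) = ζ) ∧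
  ∀ I' : Finset ι, I' ⊂ I →
    LinIndepSet (insert (fun _ : ℝ => (1 : ℝ))
      ((fun s => fun t : ℝ => ρ (β s * t + γ s)) '' (I' : Set ι)))

end NNPaper
namespace NNPaper

/-- The sign of an integer, as a complex number. -/
def sgnz (k : ℤ) : ℂ := if 0 < k then 1 else if k < 0 then -1 else 0

/-- The `k`-th term of the series defining the nonlinearities in `Z_{a,b}`:
`c k • (sgn k + tanh (π b⁻¹ (z - k a)))`. -/
def zabTerm (a b : ℝ) (c : ℤ → ℂ) (k : ℤ) (z : ℂ) : ℂ :=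
  c k * (sgnz k + Complex.tanh ((Real.pi / b : ℝ) * (z - (k : ℂ) * (a : ℂ))))

/-- Membership in the class `Z_{a,b}` of "tanh-type" nonlinearities. -/
def MemZab (a b : ℝ) (σ : ℂ → ℂ) : Prop :=
  ∃ (C : ℂ) (c : ℤ → ℂ),
    (∃ a' : ℝ, a' ∈ Set.Ioo 0 a ∧
      ∃ M : ℝ, ∀ k : ℤ, ‖c k‖ * Real.exp (-(Real.pi * a' * |(k : ℝ)|) / b) ≤ M) ∧
    (∃ k : ℤ, c k ≠ 0) ∧
    σ = fun z : ℂ => C + ∑' k : ℤ, zabTerm a b c k z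

end NNPaper
namespace NNPaper

open Finset Real

section RecSeq

variable {n : ℕ}

lemma abs_neg_inv_mul_sum_le {a M : ℝ} {β x : Fin n → ℝ} (hx : ∀ k, |x k| ≤ M) :
    |-a⁻¹ * ∑ k, β k * x k| ≤ (∑ k, |β k|) / |a| * M := by
  rw [abs_mul, abs_neg, abs_inv, div_mul_eq_mul_div, inv_mul_eq_div, Finset.sum_mul]
  gcongr
  refine (abs_sum_le_sum_abs _ _).trans (Finset.sum_le_sum fun k _ => ?_)
  rw [abs_mul]
  exact mul_le_mul_of_nonneg_left (hx k) (abs_nonneg _)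

def recSeqRank (n : ℕ) (m : ℤ) : ℕ := if m < 0 then n + m.natAbs else m.natAbs

/-- The two-sided solution of `∑ k, α k * c (m + k) = 0` with initial window `0, …, 0, 1` on
`[0, n - 1]`: forwards it is solved for the top coefficient, backwards for the bottom one. -/
def recSeq (α : Fin (n + 1) → ℝ) (m : ℤ) : ℝ :=
  if m < 0 then -(α 0)⁻¹ * ∑ k : Fin n, α k.succ * recSeq α (m + k + 1)
  else if m < n then if m = n - 1 then 1 else 0
  else -(α (Fin.last n))⁻¹ * ∑ k : Fin n, α k.castSucc * recSeq α (m - n + k)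
termination_by recSeqRank n m
decreasing_by all_goals (simp only [recSeqRank]; have := k.isLt; split_ifs <;> omega)

variable (α : Fin (n + 1) → ℝ)

lemma recSeq_of_nonneg_of_lt {m : ℤ} (h0 : 0 ≤ m) (hn : m < n) :
    recSeq α m = if m = n - 1 then 1 else 0 := by
  rw [recSeq, if_neg (not_lt.2 h0), if_pos hn]

lemma recSeq_sub_one (hn : 1 ≤ n) : recSeq α (n - 1) = 1 := by
  rw [recSeq_of_nonneg_of_lt α (by omega) (by omega), if_pos rfl]

variable {α}

lemma sum_mul_recSeq_add (hα0 : α 0 ≠ 0) (hαn : α (Fin.last n) ≠ 0) (m : ℤ) :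
    ∑ k, α k * recSeq α (m + (k : ℕ)) = 0 := by
  rcases lt_or_ge m 0 with hm | hm
  · rw [Fin.sum_univ_succ, recSeq, if_pos (by simpa using hm)]
    simp only [Fin.val_zero, Nat.cast_zero, add_zero, Fin.val_succ, Nat.cast_add, Nat.cast_one,
      add_assoc]
    field_simp
    ring
  · rw [Fin.sum_univ_castSucc, recSeq, if_neg (by simp; omega), if_neg (by simp; omega)]
    simp only [Fin.val_last, Fin.val_castSucc, add_sub_cancel_right]
    field_simp
    ring

lemma abs_recSeq_le {B : ℝ} (hB : 1 ≤ B) (h0 : (∑ k, |α k|) / |α 0| ≤ B)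
    (hn : (∑ k, |α k|) / |α (Fin.last n)| ≤ B) (m : ℤ) :
    |recSeq α m| ≤ B ^ (recSeqRank n m + 1) := by
  induction hr : recSeqRank n m using Nat.strong_induction_on generalizing m with | _ r ih
  have hcall : ∀ m', recSeqRank n m' < r → |recSeq α m'| ≤ B ^ r := fun m' h =>
    (ih _ h m' rfl).trans (pow_le_pow_right₀ hB h)
  have hstep : ∀ (β : Fin n → ℝ) (a : ℝ), (∑ k, |β k|) ≤ ∑ k, |α k| →
      (∑ k, |α k|) / |a| ≤ B → (∑ k, |β k|) / |a| * B ^ r ≤ B ^ (r + 1) := by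
    intro β a hβ ha
    rw [pow_succ']
    gcongr
    exact (div_le_div_of_nonneg_right hβ (abs_nonneg a)).trans ha
  rw [recSeq]
  split_ifs with hneg hwin hlast
  · refine (abs_neg_inv_mul_sum_le fun k => hcall _ ?_).trans (hstep _ _ ?_ h0)
    · simp only [recSeqRank] at hr ⊢; have := k.isLt; split_ifs at hr ⊢ <;> omega
    · rw [Fin.sum_univ_succ (f := fun k => |α k|)]; linarith [abs_nonneg (α 0)]
  · simpa using one_le_pow₀ hB
  · simpa using pow_nonneg (zero_le_one.trans hB) _
  · refine (abs_neg_inv_mul_sum_le fun k => hcall _ ?_).trans (hstep _ _ ?_ hn)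
    · simp only [recSeqRank] at hr ⊢; have := k.isLt; split_ifs at hr ⊢ <;> omega
    · rw [Fin.sum_univ_castSucc (f := fun k => |α k|)]; linarith [abs_nonneg (α (Fin.last n))]

lemma exists_recSeq_isBigO (α : Fin (n + 1) → ℝ) :
    ∃ L, 0 ≤ L ∧ recSeq α =O[⊤] fun m : ℤ => exp (L * |(m : ℝ)|) := by
  set B := max 1 (max ((∑ k, |α k|) / |α 0|) ((∑ k, |α k|) / |α (Fin.last n)|))
  have hB : 1 ≤ B := le_max_left _ _
  refine ⟨log B, log_nonneg hB, Asymptotics.isBigO_top.2 ⟨B ^ (n + 1), fun m => ?_⟩⟩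
  have hpow : exp (log B * |(m : ℝ)|) = B ^ m.natAbs := by
    rw [← Int.cast_abs, ← Nat.cast_natAbs, mul_comm, exp_nat_mul,
      exp_log (by linarith)]
  rw [norm_of_nonneg (exp_pos _).le, hpow, Real.norm_eq_abs, ← pow_add]
  refine (abs_recSeq_le hB ((le_max_left _ _).trans (le_max_right _ _))
    ((le_max_right _ _).trans (le_max_right _ _)) m).trans (pow_le_pow_right₀ hB ?_)
  simp only [recSeqRank]; split_ifs <;> omega

lemma eq_zero_of_sum_mul_recSeq_add_eq_zero (hn : 1 ≤ n) {μ : Fin (n + 1) → ℝ}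
    (hμ : ∀ m : ℤ, ∑ k, μ k * recSeq α (m + (k : ℕ)) = 0) (hlast : μ (Fin.last n) = 0) :
    μ = 0 := by
  by_contra hne
  obtain ⟨e, he, hmax⟩ := (univ.filter fun k => μ k ≠ 0).exists_max_image Fin.val
    (by simpa [Finset.filter_nonempty_iff, funext_iff] using hne)
  have hμe : μ e ≠ 0 := (mem_filter.1 he).2
  have hen : (e : ℕ) < n := Fin.val_lt_last (fun h => hμe (h ▸ hlast))
  apply hμe
  have := hμ (n - 1 - e)
  rwa [Finset.sum_eq_single e, sub_add_cancel, recSeq_sub_one α hn, mul_one] at this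
  · intro k _ hke
    rcases lt_or_gt_of_ne (Fin.val_ne_of_ne hke) with hlt | hgt
    · rw [recSeq_of_nonneg_of_lt α (by omega) (by omega), if_neg (by omega), mul_zero]
    · by_contra h
      exact absurd (hmax k (mem_filter.2 ⟨mem_univ k, left_ne_zero_of_mul h⟩)) (by omega)
  · simp

lemma eq_smul_of_sum_mul_recSeq_add_eq_zero (hn : 1 ≤ n) (hα0 : α 0 ≠ 0)
    (hαn : α (Fin.last n) ≠ 0) {w : Fin (n + 1) → ℝ}
    (hw : ∀ m : ℤ, ∑ k, w k * recSeq α (m + (k : ℕ)) = 0) :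
    w = (w (Fin.last n) / α (Fin.last n)) • α := by
  rw [← sub_eq_zero]
  refine eq_zero_of_sum_mul_recSeq_add_eq_zero (α := α) hn (fun m => ?_)
    (by simp [div_mul_cancel₀ _ hαn])
  simp only [Pi.sub_apply, Pi.smul_apply, smul_eq_mul, sub_mul, Finset.sum_sub_distrib, mul_assoc,
    ← Finset.mul_sum, hw, sum_mul_recSeq_add hα0 hαn, mul_zero, sub_zero]

end RecSeq

section Tanh

lemma one_add_tanh_le (y : ℝ) : 1 + tanh y ≤ 2 * exp (2 * y) := by
  have hu := exp_pos y
  have h : 1 + tanh y = 2 * exp y ^ 2 / (exp y ^ 2 + 1) := by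
    rw [tanh_eq, exp_neg]
    field_simp
    ring
  rw [h, show 2 * y = y + y by ring, exp_add, ← sq]
  exact div_le_self (by positivity) (by nlinarith)

lemma one_sub_tanh_le (y : ℝ) : 1 - tanh y ≤ 2 * exp (-(2 * y)) := by
  simpa [tanh_neg, ← sub_eq_add_neg] using one_add_tanh_le (-y)

lemma abs_sign_add_tanh_le (j : ℤ) (y : ℝ) :
    |(j.sign : ℝ) + tanh y| ≤ 2 * exp (2 * j.sign * y) := by
  rcases lt_trichotomy j 0 with hj | rfl | hj
  · rw [Int.sign_eq_neg_one_of_neg hj]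
    push_cast
    rw [abs_of_nonpos (by linarith [tanh_lt_one y])]
    simpa [neg_add_eq_sub] using one_sub_tanh_le y
  · simpa using (abs_tanh_lt_one y).le.trans one_le_two
  · rw [Int.sign_eq_one_of_pos hj]
    push_cast
    rw [abs_of_nonneg (by linarith [neg_one_lt_tanh y])]
    simpa using one_add_tanh_le y

lemma abs_sign_add_tanh_mul_sub_le {X : ℝ} (hX : 0 ≤ X) (j : ℤ) (t : ℝ) :
    |(j.sign : ℝ) + tanh (X * (t - j))| ≤ 2 * exp (2 * X * |t|) * exp (-(2 * X * |(j : ℝ)|)) := by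
  refine (abs_sign_add_tanh_le j _).trans ?_
  rw [mul_assoc 2 (exp _), ← exp_add]
  gcongr
  have hsj : (j.sign : ℝ) * j = |(j : ℝ)| := by exact_mod_cast Int.sign_mul_self_eq_abs j
  have hst : (j.sign : ℝ) * t ≤ |t| := by
    rcases Int.sign_trichotomy j with h | h | h <;> simp [h, le_abs_self, neg_le_abs]
  nlinarith

lemma abs_tanh_sub_tanh_le {X : ℝ} (hX : 0 ≤ X) {j : ℤ} (hj : j ≠ 0) :
    |tanh (X * (j + 1 / 2)) - tanh (X * (j - 1 / 2))| ≤ 4 * exp (-(X * |(j : ℝ)|)) := by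
  have hsj : (j.sign : ℝ) * j = |(j : ℝ)| := by exact_mod_cast Int.sign_mul_self_eq_abs j
  have hs : (j.sign : ℝ) = 1 ∨ (j.sign : ℝ) = -1 := by
    rcases lt_or_gt_of_ne hj with h | h
    · simp [Int.sign_eq_neg_one_of_neg h]
    · simp [Int.sign_eq_one_of_pos h]
  have hj1 : 1 ≤ |(j : ℝ)| := by rw [← Int.cast_abs]; exact_mod_cast Int.one_le_abs hj
  have bound : ∀ y, |(j : ℝ)| - 1 / 2 ≤ j.sign * y →
      |((-j).sign : ℝ) + tanh (X * y)| ≤ 2 * exp (-(X * |(j : ℝ)|)) := fun y hy => by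
    refine (abs_sign_add_tanh_le (-j) _).trans ?_
    rw [Int.sign_neg, Int.cast_neg]
    gcongr
    nlinarith
  have hsplit : tanh (X * (j + 1 / 2)) - tanh (X * (j - 1 / 2))
      = ((-j).sign + tanh (X * (j + 1 / 2))) - ((-j).sign + tanh (X * (j - 1 / 2))) := by ring
  rw [hsplit]
  refine (abs_sub _ _).trans ?_
  have h1 := bound (j + 1 / 2) (by rcases hs with h | h <;> rw [h] at hsj ⊢ <;> linarith)
  have h2 := bound (j - 1 / 2) (by rcases hs with h | h <;> rw [h] at hsj ⊢ <;> linarith)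
  linarith

lemma half_le_tanh {y : ℝ} (hy : 5 ≤ y) : 1 / 2 ≤ tanh y := by
  have h : 11 ≤ exp (2 * y) := by linarith [add_one_le_exp (2 * y)]
  have := one_sub_tanh_le y
  rw [exp_neg] at this
  have : 2 * (exp (2 * y))⁻¹ ≤ 2 / 11 := by
    rw [← div_eq_mul_inv]; gcongr
  linarith

end Tanh

section TanhSeries

variable {X L : ℝ} {c : ℤ → ℝ}

/-- The restriction to `ℝ` of the `Z_{1,b}` series with real coefficients `c`, where
`X = π / b`. -/
def tanhSeries (X : ℝ) (c : ℤ → ℝ) (t : ℝ) : ℝ :=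
  ∑' m : ℤ, c m * (m.sign + tanh (X * (t - m)))

lemma hasSum_exp_neg_mul_abs {ε : ℝ} (hε : 0 < ε) :
    HasSum (fun m : ℤ => exp (-(ε * |(m : ℝ)|))) ((1 + exp (-ε)) / (1 - exp (-ε))) := by
  have hr : exp (-ε) < 1 := exp_lt_one_iff.2 (by linarith)
  have hpow : ∀ k : ℕ, exp (-(ε * k)) = exp (-ε) ^ k := fun k => by
    rw [← exp_nat_mul]; ring_nf
  have hgeom := hasSum_geometric_of_lt_one (exp_pos (-ε)).le hr
  have hval : (1 + exp (-ε)) / (1 - exp (-ε)) =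
      (1 - exp (-ε))⁻¹ + exp (-ε) * (1 - exp (-ε))⁻¹ := by
    field_simp
  rw [hval]
  refine HasSum.of_nat_of_neg_add_one ?_ ?_
  · simpa [hpow] using hgeom
  · have h : ∀ k : ℕ, exp (-(ε * |((-(k + 1 : ℤ) : ℤ) : ℝ)|)) = exp (-ε) * exp (-ε) ^ k :=
      fun k => by
        rw [← pow_succ', ← hpow]
        push_cast
        rw [abs_neg, abs_of_nonneg (by positivity)]
    simpa only [h] using hgeom.mul_left (exp (-ε))

lemma summable_tanhSeries (hX : 0 ≤ X) (hLX : L < 2 * X)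
    (hc : c =O[⊤] fun m : ℤ => exp (L * |(m : ℝ)|)) (t : ℝ) :
    Summable fun m : ℤ => c m * (m.sign + tanh (X * (t - m))) := by
  obtain ⟨K, hK⟩ := Asymptotics.isBigO_top.1 hc
  refine Summable.of_norm_bounded
    ((hasSum_exp_neg_mul_abs (sub_pos.2 hLX)).summable.mul_left (K * (2 * exp (2 * X * |t|))))
    fun m => ?_
  have hcm : |c m| ≤ K * exp (L * |(m : ℝ)|) := by
    simpa [norm_of_nonneg (exp_pos _).le] using hK m
  rw [norm_mul, Real.norm_eq_abs, Real.norm_eq_abs]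
  calc |c m| * |(m.sign : ℝ) + tanh (X * (t - m))|
      ≤ (K * exp (L * |(m : ℝ)|)) * (2 * exp (2 * X * |t|) * exp (-(2 * X * |(m : ℝ)|))) :=
        mul_le_mul hcm (abs_sign_add_tanh_mul_sub_le hX m t) (abs_nonneg _)
          ((abs_nonneg _).trans hcm)
    _ = K * (2 * exp (2 * X * |t|)) * exp (-((2 * X - L) * |(m : ℝ)|)) := by
        rw [show -((2 * X - L) * |(m : ℝ)|) = L * |(m : ℝ)| + -(2 * X * |(m : ℝ)|) by ring,
          exp_add]
        ring

lemma tanhSeries_add_intCast (X : ℝ) (c : ℤ → ℝ) (t : ℝ) (k : ℤ) :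
    tanhSeries X c (t + k) = ∑' m : ℤ, c (m + k) * ((m + k).sign + tanh (X * (t - m))) := by
  rw [tanhSeries, ← (Equiv.addRight k).tsum_eq]
  refine tsum_congr fun m => ?_
  simp only [Equiv.coe_addRight]
  congr 3
  push_cast
  ring

lemma isBigO_sum_mul_comp_add (hL : 0 ≤ L) (hc : c =O[⊤] fun m : ℤ => exp (L * |(m : ℝ)|))
    {ι : Type*} (s : Finset ι) (w : ι → ℝ) (κ : ι → ℤ) :
    (fun m => ∑ i ∈ s, w i * c (m + κ i)) =O[⊤] fun m : ℤ => exp (L * |(m : ℝ)|) := by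
  have hshift : ∀ k : ℤ, (fun m => c (m + k)) =O[⊤] fun m : ℤ => exp (L * |(m : ℝ)|) :=
    fun k => (hc.comp_tendsto Filter.tendsto_top).trans
      (Asymptotics.isBigO_top.2 ⟨exp (L * |(k : ℝ)|), fun m => by
        simp only [Function.comp_apply, norm_of_nonneg (exp_pos _).le, ← exp_add, Int.cast_add]
        gcongr
        rw [← mul_add]
        exact mul_le_mul_of_nonneg_left ((abs_add_le _ _).trans_eq (add_comm _ _)) hL⟩)
  exact Asymptotics.IsBigO.fun_sum fun i _ => (hshift (κ i)).const_mul_left (w i)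

lemma sum_mul_tanhSeries_add (hX : 0 ≤ X) (hL : 0 ≤ L) (hLX : L < 2 * X)
    (hc : c =O[⊤] fun m : ℤ => exp (L * |(m : ℝ)|)) {ι : Type*} (s : Finset ι) (w : ι → ℝ)
    (κ : ι → ℤ) (t : ℝ) :
    ∑ i ∈ s, w i * tanhSeries X c (t + κ i) =
      tanhSeries X (fun m => ∑ i ∈ s, w i * c (m + κ i)) t +
        ∑' m : ℤ, ∑ i ∈ s, w i * (c (m + κ i) * ((m + κ i).sign - m.sign)) := by
  set R : ℤ → ℝ := fun m => ∑ i ∈ s, w i * (c (m + κ i) * ((m + κ i).sign - m.sign))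
  set G : ℤ → ℝ := fun m => (∑ i ∈ s, w i * c (m + κ i)) * (m.sign + tanh (X * (t - m)))
  have hshift : ∀ k : ℤ, Summable fun m => c (m + k) * ((m + k).sign + tanh (X * (t - m))) :=
    fun k => ((Equiv.addRight k).summable_iff.2 (summable_tanhSeries hX hLX hc (t + k))).congr
      fun m => by simp only [Function.comp_apply, Equiv.coe_addRight, Int.cast_add]; ring_nf
  have hG : Summable G := summable_tanhSeries hX hLX (isBigO_sum_mul_comp_add hL hc s w κ) t
  have hsplit : ∀ m, ∑ i ∈ s, w i * (c (m + κ i) * ((m + κ i).sign + tanh (X * (t - m))))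
      = G m + R m := fun m => by
    simp only [G, R, Finset.sum_mul, ← Finset.sum_add_distrib]
    exact Finset.sum_congr rfl fun i _ => by ring
  have hF : Summable fun m => G m + R m :=
    (summable_sum fun i _ => (hshift (κ i)).mul_left (w i)).congr hsplit
  simp_rw [tanhSeries_add_intCast, ← tsum_mul_left]
  rw [← Summable.tsum_finsetSum fun i _ => (hshift (κ i)).mul_left (w i), tsum_congr hsplit,
    Summable.tsum_add hG ((hF.sub hG).congr fun m => add_sub_cancel_left _ _)]
  rfl

lemma hasSum_ite_exp_neg_mul_abs_sub {ε : ℝ} (hε : 0 < ε) (m₀ : ℤ) :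
    HasSum (fun m : ℤ => if m = m₀ then 0 else exp (-(ε * |((m - m₀ : ℤ) : ℝ)|)))
      (2 * exp (-ε) / (1 - exp (-ε))) := by
  have h := hasSum_ite_sub_hasSum
    ((Equiv.subRight m₀).hasSum_iff.2 (hasSum_exp_neg_mul_abs hε)) m₀
  have hr : exp (-ε) < 1 := exp_lt_one_iff.2 (by linarith)
  have hr' : 1 - exp (-ε) ≠ 0 := (sub_pos.2 hr).ne'
  rw [show 2 * exp (-ε) / (1 - exp (-ε)) = (1 + exp (-ε)) / (1 - exp (-ε)) - 1 by
    field_simp; ring]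
  simpa only [Function.comp_apply, Equiv.subRight_apply, sub_self, Int.cast_zero, abs_zero,
    mul_zero, neg_zero, exp_zero] using h

lemma abs_mul_tanh_sub_tanh_le (hX : 0 ≤ X) (hL : 0 ≤ L) {D a : ℝ} {m m₀ : ℤ} (hm : m ≠ m₀)
    (ha : |a| ≤ D * exp (L * |(m : ℝ)|)) :
    |a * (tanh (X * ((m₀ - m : ℤ) + 1 / 2)) - tanh (X * ((m₀ - m : ℤ) - 1 / 2)))|
      ≤ 4 * (D * exp (L * |(m₀ : ℝ)|)) * exp (-((X - L) * |((m - m₀ : ℤ) : ℝ)|)) := by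
  have hD : 0 ≤ D := nonneg_of_mul_nonneg_left ((abs_nonneg _).trans ha) (exp_pos _)
  have hdist : |((m₀ - m : ℤ) : ℝ)| = |((m - m₀ : ℤ) : ℝ)| := by
    rw [← abs_neg]; push_cast; ring_nf
  have hm' : |(m : ℝ)| ≤ |(m₀ : ℝ)| + |((m - m₀ : ℤ) : ℝ)| := by
    push_cast; simpa using abs_add_le (m₀ : ℝ) (m - m₀)
  rw [abs_mul]
  calc |a| * |tanh (X * ((m₀ - m : ℤ) + 1 / 2)) - tanh (X * ((m₀ - m : ℤ) - 1 / 2))|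
      ≤ (D * exp (L * |(m : ℝ)|)) * (4 * exp (-(X * |((m - m₀ : ℤ) : ℝ)|))) := by
        rw [← hdist]
        exact mul_le_mul ha (abs_tanh_sub_tanh_le hX (sub_ne_zero.2 (Ne.symm hm)))
          (abs_nonneg _) (by positivity)
    _ ≤ (D * exp (L * (|(m₀ : ℝ)| + |((m - m₀ : ℤ) : ℝ)|))) *
          (4 * exp (-(X * |((m - m₀ : ℤ) : ℝ)|))) := by gcongr
    _ = 4 * (D * exp (L * |(m₀ : ℝ)|)) * exp (-((X - L) * |((m - m₀ : ℤ) : ℝ)|)) := by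
        rw [mul_add, exp_add, show -((X - L) * |((m - m₀ : ℤ) : ℝ)|) =
          L * |((m - m₀ : ℤ) : ℝ)| + -(X * |((m - m₀ : ℤ) : ℝ)|) by ring, exp_add]
        ring

lemma abs_le_of_tanhSeries_eq (hL : 0 ≤ L) (hX : L + 10 ≤ X) {D : ℝ}
    (hD : ∀ m, |c m| ≤ D * exp (L * |(m : ℝ)|)) (m₀ : ℤ)
    (heq : tanhSeries X c (m₀ + 1 / 2) = tanhSeries X c (m₀ - 1 / 2)) :
    |c m₀| ≤ 4 / 5 * (D * exp (L * |(m₀ : ℝ)|)) := by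
  have hc : c =O[⊤] fun m : ℤ => exp (L * |(m : ℝ)|) :=
    Asymptotics.isBigO_top.2 ⟨D, fun m => by simpa [norm_of_nonneg (exp_pos _).le] using hD m⟩
  have hsum := summable_tanhSeries (X := X) (by linarith) (by linarith) hc
  set u : ℤ → ℝ := fun m =>
    c m * (tanh (X * ((m₀ - m : ℤ) + 1 / 2)) - tanh (X * ((m₀ - m : ℤ) - 1 / 2)))
  have hu : HasSum u 0 := by
    have := (hsum (m₀ + 1 / 2)).hasSum.sub (hsum (m₀ - 1 / 2)).hasSum
    rw [← tanhSeries, ← tanhSeries, heq, sub_self] at this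
    exact this.congr_fun fun m => by simp only [u]; push_cast; ring_nf
  have hu₀ : u m₀ = c m₀ * (2 * tanh (X / 2)) := by
    simp only [u, sub_self, Int.cast_zero, zero_add, zero_sub, mul_neg, tanh_neg]
    ring_nf
  set r := exp (-(X - L)) with hr_def
  set C := 4 * (D * exp (L * |(m₀ : ℝ)|)) with hC
  have hr : r ≤ 1 / 11 := by
    have : 11 ≤ exp (X - L) := by linarith [add_one_le_exp (X - L)]
    rw [hr_def, exp_neg]
    exact inv_le_of_inv_le₀ (by norm_num) (by linarith)
  have hle := (hasSum_ite_sub_hasSum hu m₀).norm_le_of_bounded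
    ((hasSum_ite_exp_neg_mul_abs_sub (ε := X - L) (by linarith) m₀).mul_left C) fun m => by
      split_ifs with hm
      · simp
      · exact abs_mul_tanh_sub_tanh_le (by linarith) hL hm (hD m)
  have htanh : 1 ≤ 2 * tanh (X / 2) := by linarith [half_le_tanh (y := X / 2) (by linarith)]
  rw [zero_sub, norm_neg, hu₀, Real.norm_eq_abs, abs_mul,
    abs_of_pos (a := 2 * tanh (X / 2)) (by linarith)] at hle
  have h2r : C * (2 * r / (1 - r)) ≤ C / 5 := by
    have : 2 * r / (1 - r) ≤ 1 / 5 := by rw [div_le_iff₀ (by linarith)]; linarith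
    nlinarith [mul_nonneg zero_le_four ((abs_nonneg _).trans (hD m₀))]
  nlinarith [mul_le_mul_of_nonneg_left htanh (abs_nonneg (c m₀))]

lemma eq_zero_of_tanhSeries_const (hL : 0 ≤ L) (hX : L + 10 ≤ X)
    (hc : c =O[⊤] fun m : ℤ => exp (L * |(m : ℝ)|))
    (hconst : ∀ t₁ t₂, tanhSeries X c t₁ = tanhSeries X c t₂) : c = 0 := by
  obtain ⟨K, hK⟩ := Asymptotics.isBigO_top.1 hc
  set q : ℤ → ℝ := fun m => |c m| * exp (-(L * |(m : ℝ)|))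
  have hqc : ∀ m, |c m| = q m * exp (L * |(m : ℝ)|) := fun m => by
    simp only [q, mul_assoc, ← exp_add, neg_add_cancel, exp_zero, mul_one]
  have hbdd : BddAbove (Set.range q) := ⟨K, Set.forall_mem_range.2 fun m => by
    have := hK m
    rw [Real.norm_eq_abs, hqc, norm_of_nonneg (exp_pos _).le] at this
    exact le_of_mul_le_mul_right this (exp_pos _)⟩
  set D := ⨆ m, q m
  have hqD : ∀ m, q m ≤ D := le_ciSup hbdd
  have hcontr : ∀ m, q m ≤ 4 / 5 * D := fun m => by
    have := abs_le_of_tanhSeries_eq hL hX (D := D)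
      (fun m => by rw [hqc]; exact mul_le_mul_of_nonneg_right (hqD m) (exp_pos _).le) m
      (hconst _ _)
    rw [hqc, ← mul_assoc] at this
    exact le_of_mul_le_mul_right this (exp_pos _)
  have hq0 : ∀ m, 0 ≤ q m := fun m => by positivity
  have hD : D ≤ 0 := by linarith [ciSup_le hcontr, hq0 0, hqD 0]
  funext m
  have h := hqc m
  rw [le_antisymm ((hqD m).trans hD) (hq0 m), zero_mul] at h
  exact abs_eq_zero.1 h

end TanhSeries

lemma linIndepSet_insert_one_image {ι : Type*} (φ : ι → ℝ → ℝ) (s : Finset ι)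
    (h : ∀ (μ : ℝ) (w : ι → ℝ), (∀ t, μ + ∑ i ∈ s, w i * φ i t = 0) → ∀ i ∈ s, w i = 0) :
    LinIndepSet (insert (fun _ => 1) (φ '' s)) := by
  have hφ : LinearIndepOn ℝ φ s := linearIndepOn_finset_iff.2 fun w hw =>
    h 0 w fun t => by simpa using congrFun hw t
  have h1 : (fun _ : ℝ => (1 : ℝ)) ∉ Submodule.span ℝ (φ '' s) := by
    rw [Submodule.mem_span_image_finset_iff_exists_fun']
    rintro ⟨w, hw⟩
    have hw0 := h (-1) w fun t => by simpa [neg_add_eq_sub, sub_eq_zero] using congrFun hw t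
    rw [Finset.sum_eq_zero fun i hi => by rw [hw0 i hi, zero_smul]] at hw
    simpa using congrFun hw 0
  exact hφ.id_image.id_insert h1

lemma exists_isAffineSymmetry_tanhSeries_recSeq {n : ℕ} (hn : 1 ≤ n) {α : Fin (n + 1) → ℝ}
    (hα : ∀ k, α k ≠ 0) {X L : ℝ} (hL : 0 ≤ L) (hX : L + 10 ≤ X)
    (hc : recSeq α =O[⊤] fun m : ℤ => exp (L * |(m : ℝ)|)) :
    ∃ ζ, IsAffineSymmetry (tanhSeries X (recSeq α)) univ ζ α (fun _ => 1)
      (fun k => ((k : ℕ) : ℝ)) := by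
  set C : (Fin (n + 1) → ℝ) → ℝ := fun w =>
    ∑' m : ℤ, ∑ k, w k * (recSeq α (m + (k : ℕ)) * ((m + (k : ℕ)).sign - m.sign))
  have hshift : ∀ (w : Fin (n + 1) → ℝ) (t : ℝ),
      ∑ k, w k * tanhSeries X (recSeq α) (1 * t + ((k : ℕ) : ℝ)) =
        tanhSeries X (fun m => ∑ k, w k * recSeq α (m + (k : ℕ))) t + C w := fun w t => by
    simpa using sum_mul_tanhSeries_add (by linarith) hL (by linarith) hc univ w
      (fun k => ((k : ℕ) : ℤ)) t
  refine ⟨C α, univ_nonempty, fun t => ?_, fun I' hI' => ?_⟩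
  · change ∑ k, α k * tanhSeries X (recSeq α) (1 * t + ((k : ℕ) : ℝ)) = C α
    rw [hshift]
    simp only [sum_mul_recSeq_add (hα 0) (hα _)]
    simp [tanhSeries]
  obtain ⟨j, -, hj⟩ := Finset.exists_of_ssubset hI'
  refine linIndepSet_insert_one_image _ I' fun μ w hrel => ?_
  set w' : Fin (n + 1) → ℝ := fun k => if k ∈ I' then w k else 0
  have hrel' : ∀ t, tanhSeries X (fun m => ∑ k, w' k * recSeq α (m + (k : ℕ))) t = -μ - C w' :=
    fun t => by
      have hsupp : ∑ k, w' k * tanhSeries X (recSeq α) (1 * t + ((k : ℕ) : ℝ)) =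
          ∑ i ∈ I', w i * tanhSeries X (recSeq α) (1 * t + ((i : ℕ) : ℝ)) := by
        rw [← Finset.sum_subset (subset_univ I') fun k _ hk => by simp [w', hk]]
        exact Finset.sum_congr rfl fun k hk => by simp [w', hk]
      linarith [hrel t, hshift w' t]
  have hd := eq_zero_of_tanhSeries_const hL hX (isBigO_sum_mul_comp_add hL hc _ _ _)
    fun t₁ t₂ => by rw [hrel', hrel']
  have hw' := eq_smul_of_sum_mul_recSeq_add_eq_zero hn (hα 0) (hα _) (congrFun hd)
  have hr : w' (Fin.last n) / α (Fin.last n) = 0 := by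
    simpa [w', hj, hα j] using congrFun hw' j
  intro i hi
  simpa [w', hi, hr] using congrFun hw' i

section Zab

def zabSeries (b : ℝ) (c : ℤ → ℝ) (z : ℂ) : ℂ :=
  ∑' k : ℤ, zabTerm 1 b (fun k => (c k : ℂ)) k z

lemma sgnz_eq_sign (k : ℤ) : sgnz k = k.sign := by
  rcases lt_trichotomy k 0 with h | rfl | h
  · simp [sgnz, h, h.not_gt, Int.sign_eq_neg_one_of_neg h]
  · simp [sgnz]
  · simp [sgnz, h, Int.sign_eq_one_of_pos h]

lemma zabSeries_ofReal (X : ℝ) (c : ℤ → ℝ) (t : ℝ) :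
    zabSeries (π / X) c t = tanhSeries X c t := by
  rw [zabSeries, tanhSeries, Complex.ofReal_tsum]
  refine tsum_congr fun k => ?_
  simp only [zabTerm, sgnz_eq_sign, div_div_cancel₀ pi_ne_zero]
  push_cast
  ring_nf

lemma memZab_zabSeries {X L : ℝ} {c : ℤ → ℝ} (hLX : 2 * L ≤ X)
    (hc : c =O[⊤] fun m : ℤ => exp (L * |(m : ℝ)|)) (hc0 : c ≠ 0) :
    MemZab 1 (π / X) (zabSeries (π / X) c) := by
  obtain ⟨K, hK⟩ := Asymptotics.isBigO_top.1 hc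
  obtain ⟨k₀, hk₀⟩ := Function.ne_iff.1 hc0
  refine ⟨0, fun k => c k, ⟨1 / 2, ⟨by norm_num, by norm_num⟩, K, fun k => ?_⟩,
    ⟨k₀, by simpa using hk₀⟩, by funext z; simp [zabSeries]⟩
  have hK0 : 0 ≤ K := nonneg_of_mul_nonneg_left ((norm_nonneg _).trans (hK 0)) (by simp)
  have hexp : -(π * (1 / 2) * |(k : ℝ)|) / (π / X) = -(X / 2 * |(k : ℝ)|) := by
    field_simp
  rw [Complex.norm_real, hexp]
  calc ‖c k‖ * exp (-(X / 2 * |(k : ℝ)|))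
      ≤ K * exp (L * |(k : ℝ)|) * exp (-(X / 2 * |(k : ℝ)|)) := by
        gcongr
        simpa [norm_of_nonneg (exp_pos _).le] using hK k
    _ ≤ K := by
        rw [mul_assoc, ← exp_add]
        refine mul_le_of_le_one_right hK0 (exp_le_one_iff.2 ?_)
        nlinarith [abs_nonneg (k : ℝ)]

end Zab

/-- **Exotic affine symmetries in `Z_{1,b}`.** For arbitrary nonzero reals
`α₀, …, α_n` with `n ≥ 1`, there exist `b > 0`, `ζ ∈ ℝ`, and a real-valued
`σ ∈ Z_{1,b}` such that `(ζ, {(α_k, 1, k)}_{k=0}^n)` is an affine symmetry of the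
restriction of `σ` to `ℝ`. -/
theorem zab_exotic_symmetry (n : ℕ) (hn : 1 ≤ n) (α : Fin (n + 1) → ℝ)
    (hα : ∀ k, α k ≠ 0) :
    ∃ b : ℝ, 0 < b ∧ ∃ (ζ : ℝ) (σ : ℂ → ℂ), MemZab 1 b σ ∧
      (∀ t : ℝ, (σ ↑t).im = 0) ∧
      IsAffineSymmetry (fun t : ℝ => (σ ↑t).re) (Finset.univ : Finset (Fin (n + 1)))
        ζ α (fun _ => 1) (fun k => ((k : ℕ) : ℝ)) := by
  obtain ⟨L, hL, hc⟩ := exists_recSeq_isBigO α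
  set X := 2 * L + 10
  have hc0 : recSeq α ≠ 0 := fun h => by simpa [h] using recSeq_sub_one α hn
  obtain ⟨ζ, hζ⟩ := exists_isAffineSymmetry_tanhSeries_recSeq (X := X) hn hα hL (by linarith) hc
  refine ⟨π / X, by positivity, ζ, zabSeries (π / X) (recSeq α),
    memZab_zabSeries (by linarith) hc hc0, fun t => by simp [zabSeries_ofReal], ?_⟩
  simpa [zabSeries_ofReal] using hζ

end NNPaper
end
end

section
/- Let ρ: ℝ → ℝ be a nonlinearity, let J be a finite index set, and let {(α_s, β_s, γ_s)}_{s∈J} be triples of real numbers such that Σ_{s∈J} α_s ρ(β_s·+γ_s) is a constant function. If j* ∈ J is such that α_{j*} ≠ 0, then there exist a subset I ⊆ J with j* ∈ I and real numbers {α̃_s}_{s∈I} with α̃_{j*} ≠ 0 such that (ζ, {(α̃_s, β_s, γ_s)}_{s∈I}) is an affine symmetry of ρ for some ζ ∈ ℝ. -/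
open scoped Classical
noncomputable section

/-! A combination of the `f s` landing in a submodule `p` with a nonzero coefficient at `j` can be
chosen with support `I` as small as possible. Then every proper subfamily of `(f s)_{s ∈ I}` is
linearly independent modulo `p`: a relation modulo `p` on a proper subset either already has a
nonzero coefficient at `j`, or can be subtracted from the original one to kill a coefficient
other than `j`, and both contradict minimality. For `p` the constants this is exactly the
minimality condition of an affine symmetry. -/

namespace NNPaper

open Finsupp Submodule

section Relations

variable {K M ι : Type*} [Field K] [AddCommGroup M] [Module K M]

def HasRelationModulo (p : Submodule K M) (f : ι → M) (j : ι) (s : Set ι) : Prop :=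
  ∃ l ∈ supported K K s, l j ≠ 0 ∧ linearCombination K f l ∈ p

variable {p : Submodule K M} {f : ι → M} {j : ι}

theorem hasRelationModulo_of_sum_mem {I : Finset ι} {a : ι → K} (hj : j ∈ I) (ha : a j ≠ 0)
    (h : ∑ s ∈ I, a s • f s ∈ p) : HasRelationModulo p f j I := by
  refine ⟨∑ s ∈ I, single s (a s), sum_mem fun s hs => single_mem_supported K _ hs, ?_, ?_⟩
  · simpa [finsetSum_apply, single_apply, hj] using ha
  · simpa [map_sum] using h

namespace HasRelationModulo

theorem mem {s : Set ι} (h : HasRelationModulo p f j s) : j ∈ s := by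
  obtain ⟨l, hl, hlj, -⟩ := h
  exact hl (mem_support_iff.2 hlj)

theorem exists_sum_mem {I : Finset ι} (h : HasRelationModulo p f j I) :
    ∃ a : ι → K, a j ≠ 0 ∧ ∑ s ∈ I, a s • f s ∈ p := by
  obtain ⟨l, hl, hlj, hlp⟩ := h
  exact ⟨l, hlj, linearCombination_apply_of_mem_supported K (v := f) hl ▸ hlp⟩

theorem exists_ssubset_of_not_linearIndepOn {I T : Finset ι}
    (h : HasRelationModulo p f j I) (hT : T ⊂ I) (hdep : ¬LinearIndepOn K (p.mkQ ∘ f) T) :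
    ∃ I' ⊂ I, HasRelationModulo p f j I' := by
  obtain ⟨l, hl, hlj, hlp⟩ := h
  obtain ⟨g, hg, hgp, hg0⟩ :
      ∃ g ∈ supported K K (T : Set ι), linearCombination K f g ∈ p ∧ g ≠ 0 := by
    simpa [linearIndepOn_iff, ← apply_linearCombination] using hdep
  by_cases hgj : g j = 0
  · obtain ⟨s₀, hs₀⟩ : ∃ s₀, g s₀ ≠ 0 := DFunLike.ne_iff.1 hg0
    have hs₀T : s₀ ∈ T := hg (mem_support_iff.2 hs₀)
    refine ⟨I.erase s₀, Finset.erase_ssubset (hT.subset hs₀T), l - (l s₀ / g s₀) • g, ?_,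
      by simp [hgj, hlj], ?_⟩
    · rw [mem_supported']
      intro x hx
      by_cases hx₀ : x = s₀
      · subst hx₀
        simp [div_mul_cancel₀ _ hs₀]
      · have hxI : x ∉ (I : Set ι) := fun h => hx (Finset.mem_erase.2 ⟨hx₀, h⟩)
        have hxT : x ∉ (T : Set ι) := fun h => hxI (hT.subset h)
        simp [(mem_supported' K l).1 hl x hxI, (mem_supported' K g).1 hg x hxT]
    · rw [map_sub, map_smul]
      exact sub_mem hlp (smul_mem _ _ hgp)
  · exact ⟨T, hT, g, hg, hgj, hgp⟩

theorem exists_subset_forall_ssubset_linearIndepOn {J : Finset ι} (h : HasRelationModulo p f j J) :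
    ∃ I ⊆ J, HasRelationModulo p f j I ∧ ∀ T ⊂ I, LinearIndepOn K (p.mkQ ∘ f) T := by
  induction J using Finset.strongInduction with
  | H J ih =>
    by_cases hind : ∀ T ⊂ J, LinearIndepOn K (p.mkQ ∘ f) T
    · exact ⟨J, subset_rfl, h, hind⟩
    push Not at hind
    obtain ⟨T, hT, hdep⟩ := hind
    obtain ⟨I', hI', hI'rel⟩ := h.exists_ssubset_of_not_linearIndepOn hT hdep
    obtain ⟨I, hI, hIrel⟩ := ih I' hI' hI'rel
    exact ⟨I, hI.trans hI'.subset, hIrel⟩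

end HasRelationModulo

theorem linearIndepOn_id_insert_image {e : M} (he : e ≠ 0) {s : Set ι}
    (h : LinearIndepOn K ((K ∙ e).mkQ ∘ f) s) : LinearIndepOn K id (insert e (f '' s)) := by
  rw [Set.insert_eq]
  exact LinearIndepOn.union_id_of_quotient
    (Set.singleton_subset_iff.2 (mem_span_singleton_self e))
    ((linearIndepOn_singleton_iff K).2 he) (h.image_of_comp f _)

theorem mem_span_const_one_iff {X : Type*} {g : X → K} :
    g ∈ K ∙ (fun _ => 1) ↔ ∃ c, ∀ x, g x = c := by
  rw [mem_span_singleton]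
  constructor
  · rintro ⟨c, rfl⟩
    exact ⟨c, by simp⟩
  · rintro ⟨c, hc⟩
    exact ⟨c, funext fun x => by simp [hc]⟩

end Relations

theorem affine_symmetry_of_constant_combination_general {ι : Type} (ρ : ℝ → ℝ)
    (J : Finset ι) (α β γ : ι → ℝ)
    (hconst : ∃ c : ℝ, ∀ t : ℝ, ∑ s ∈ J, α s * ρ (β s * t + γ s) = c)
    (j : ι) (hj : j ∈ J) (hα : α j ≠ 0) :
    ∃ I : Finset ι, I ⊆ J ∧ j ∈ I ∧
      ∃ (αt : ι → ℝ) (ζ : ℝ), αt j ≠ 0 ∧ IsAffineSymmetry ρ I ζ αt β γ := by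
  set f : ι → ℝ → ℝ := fun s t => ρ (β s * t + γ s)
  have hJ : HasRelationModulo (ℝ ∙ fun _ => 1) f j J :=
    hasRelationModulo_of_sum_mem hj hα
      (mem_span_const_one_iff.2 (by simpa [f, Finset.sum_apply] using hconst))
  obtain ⟨I, hIJ, hI, hindep⟩ := hJ.exists_subset_forall_ssubset_linearIndepOn
  obtain ⟨αt, hαt, hsum⟩ := hI.exists_sum_mem
  obtain ⟨ζ, hζ⟩ := mem_span_const_one_iff.1 hsum
  refine ⟨I, hIJ, hI.mem, αt, ζ, hαt, ⟨j, hI.mem⟩,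
    fun t => by simpa [f, Finset.sum_apply] using hζ t, fun I' hI' => ?_⟩
  exact linearIndepOn_id_insert_image one_ne_zero (hindep I' hI')

/-- If a finite combination `∑_{s ∈ J} α s • ρ (β s • ⬝ + γ s)` is constant and
`α j ≠ 0` for some `j ∈ J`, then there is a subset `I ⊆ J` containing `j` and
coefficients `α̃` with `α̃ j ≠ 0` such that `(ζ, {(α̃ s, β s, γ s)}_{s ∈ I})` is an
affine symmetry of `ρ` for some `ζ`. -/
theorem affine_symmetry_of_constant_combination {ι : Type} (ρ : ℝ → ℝ)
    (hρ : Nonlinearity ρ) (J : Finset ι) (α β γ : ι → ℝ)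
    (hconst : ∃ c : ℝ, ∀ t : ℝ, ∑ s ∈ J, α s * ρ (β s * t + γ s) = c)
    (j : ι) (hj : j ∈ J) (hα : α j ≠ 0) :
    ∃ I : Finset ι, I ⊆ J ∧ j ∈ I ∧
      ∃ (αt : ι → ℝ) (ζ : ℝ), αt j ≠ 0 ∧ IsAffineSymmetry ρ I ζ αt β γ :=
  affine_symmetry_of_constant_combination_general ρ J α β γ hconst j hj hα

end NNPaper
end
end

section
/- Let Π = aℤ × ibℤ be a lattice in ℂ with a, b > 0, let β ∈ ℂ\{0} and γ ∈ ℂ, and set P = β⁻¹(Π − γ). Suppose ℓ is a line in ℂ such that the asymptotic density Δ(ℓ, P) is strictly positive. Then ℓ ∩ P is an arithmetic sequence, and there exists ε₀ > 0 such that every point of P whose distance to ℓ is at most ε₀ lies on ℓ, i.e., (ℓ + D(0, ε₀)) ∩ P = ℓ ∩ P. -/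
open scoped Classical
noncomputable section
namespace NNPaper

/-- A line in `ℂ`. -/
def IsLine (L : Set ℂ) : Prop :=
  ∃ x y : ℂ, y ≠ 0 ∧ L = {z : ℂ | ∃ t : ℝ, z = x + (t : ℂ) * y}

/-- An arithmetic sequence in `ℂ`. -/
def IsArithSeq (S : Set ℂ) : Prop :=
  ∃ x y : ℂ, y ≠ 0 ∧ S = {z : ℂ | ∃ k : ℤ, z = x + (k : ℂ) * y}

/-- `Δ_ε(F, P)`: the `ε`-thickened counting density of `P` along `F`. -/
noncomputable def densEps (F P : Set ℂ) (ε : ℝ) : ℝ :=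
  Filter.limsup (fun N : ℝ =>
    (({p : ℂ | p ∈ P ∧ ‖p‖ ≤ N ∧ ∃ q ∈ F, ‖p - q‖ ≤ ε}.ncard : ℝ)) / (2 * N))
    Filter.atTop

/-- The asymptotic density `Δ(F, P)` of `P` along `F`. -/
noncomputable def dens (F P : Set ℂ) : ℝ :=
  sInf {d : ℝ | ∃ ε : ℝ, 0 < ε ∧ d = densEps F P ε}

/-- The lattice `aℤ × i bℤ ⊆ ℂ`. -/
def latticeZ (a b : ℝ) : Set ℂ :=
  {z : ℂ | ∃ m n : ℤ, z = (a : ℂ) * (m : ℂ) + Complex.I * ((b : ℂ) * (n : ℂ))}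

end NNPaper

/-!
Write `ℓ = x + ℝ y` and measure the offset of a point `p` from `ℓ` by the area form
`ω y (p - x)`. It is additive, so on the coset `P = z₀ + Λ` of the discrete group
`Λ = β⁻¹ Π` its values are `ω y (z₀ - x) + ω y (Λ)`.

If `ω y` kills a nonzero vector of `Λ = ℤ e₁ + ℤ e₂`, then `(ω y e₁, ω y e₂)` is a real multiple
`c (p, q)` of a primitive integer vector, so `ω y (Λ) ⊆ cℤ` and the kernel is `ℤ (q e₁ - p e₂)`.
The values `ω y (z₀ - x) + cℤ` are isolated from `0`, so a thin strip around `ℓ` meets `P` only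
on `ℓ`; positive density makes `ℓ ∩ P` nonempty, and then it is a translate of `ℤ (q e₁ - p e₂)`.

Otherwise `ω y` is injective on `Λ`. Only finitely many vectors of `Λ` are shorter than `R`, so
`|ω y|` is bounded below on them, and the points of `P` in a thin enough strip are `R`-separated.
Their counting density is then at most `2 / R`, which contradicts `Δ(ℓ, P) > 0` for large `R`.
-/

open Filter Topology ComplexConjugate

namespace NNPaper

attribute [local instance] Complex.finrank_real_complex_fact

local notation "ω" => Complex.orientation.areaForm

-- The paper's `F + D(0, ε)`.
def epsNbhd (F : Set ℂ) (ε : ℝ) : Set ℂ := {p : ℂ | ∃ q ∈ F, ‖p - q‖ ≤ ε}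

-- `dens` is an `sInf` in `ℝ`, hence `0` on a set unbounded below: `hd` rules this out.
lemma dens_le_densEps {F P : Set ℂ} (hd : 0 < dens F P) {ε : ℝ} (hε : 0 < ε) :
    dens F P ≤ densEps F P ε := by
  by_cases hb : BddBelow {d : ℝ | ∃ ε : ℝ, 0 < ε ∧ d = densEps F P ε}
  · exact csInf_le hb ⟨ε, hε, rfl⟩
  · rw [dens, Real.sInf_of_not_bddBelow hb] at hd
    exact absurd hd (lt_irrefl 0)

lemma inter_nonempty_of_dens_pos {F P : Set ℂ} (hd : 0 < dens F P) {ε : ℝ} (hε : 0 < ε)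
    (hF : P ∩ epsNbhd F ε ⊆ F) : (F ∩ P).Nonempty := by
  by_contra h
  have hempty : ∀ N : ℝ, {p : ℂ | p ∈ P ∧ ‖p‖ ≤ N ∧ ∃ q ∈ F, ‖p - q‖ ≤ ε} = ∅ := fun N ↦
    Set.eq_empty_of_forall_notMem fun p ⟨hp, _, hnear⟩ ↦ h ⟨p, hF ⟨hp, hnear⟩, hp⟩
  have hzero : densEps F P ε = 0 := by simp [densEps, hempty]
  linarith [dens_le_densEps hd hε]

lemma limsup_div_two_mul_le {c : ℝ → ℝ} {A B : ℝ} (hc₀ : ∀ N, 0 ≤ c N)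
    (hc : ∀ᶠ N in atTop, c N ≤ A * N + B) :
    limsup (fun N ↦ c N / (2 * N)) atTop ≤ A / 2 := by
  have hlim : Tendsto (fun N : ℝ ↦ A / 2 + B / 2 * N⁻¹) atTop (𝓝 (A / 2)) := by
    simpa using (tendsto_inv_atTop_zero.const_mul (B / 2)).const_add (A / 2)
  have hle : ∀ᶠ N in atTop, c N / (2 * N) ≤ A / 2 + B / 2 * N⁻¹ := by
    filter_upwards [hc, eventually_gt_atTop 0] with N hN hN₀
    rw [div_le_iff₀ (by positivity)]
    field_simp
    linarith
  have hcobdd : IsCoboundedUnder (· ≤ ·) atTop fun N ↦ c N / (2 * N) :=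
    isCoboundedUnder_le_of_eventually_le atTop
      (eventually_ge_atTop 0 |>.mono fun N hN ↦ div_nonneg (hc₀ N) (by positivity))
  exact (limsup_le_limsup hle hcobdd hlim.isBoundedUnder_le).trans_eq hlim.limsup_eq

lemma ncard_le_of_separated {α : Type*} {S : Set α} (φ : α → ℝ) {s G : ℝ} (hs : 0 < s)
    (hG : 0 ≤ G) (hbdd : ∀ p ∈ S, |φ p| ≤ G)
    (hsep : S.Pairwise fun p q ↦ s ≤ |φ p - φ q|) :
    (S.ncard : ℝ) ≤ 2 * G / s + 1 := by
  set K := ⌊2 * G / s⌋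
  have hK : 0 ≤ K := Int.floor_nonneg.mpr (by positivity)
  have hmaps : ∀ p ∈ S, ⌊(φ p + G) / s⌋ ∈ (Finset.Icc 0 K : Set ℤ) := fun p hp ↦ by
    have := abs_le.mp (hbdd p hp)
    simp only [Finset.coe_Icc, Set.mem_Icc]
    exact ⟨Int.floor_nonneg.mpr (by apply div_nonneg <;> linarith),
      Int.floor_le_floor (by gcongr; linarith)⟩
  have hinj : Set.InjOn (fun p ↦ ⌊(φ p + G) / s⌋) S := fun p hp q hq hpq ↦ by
    by_contra hne
    have h := Int.abs_sub_lt_one_of_floor_eq_floor hpq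
    rw [← sub_div, abs_div, abs_of_pos hs, div_lt_one hs, add_sub_add_right_eq_sub] at h
    linarith [hsep hp hq hne]
  have hcard := Set.ncard_le_ncard_of_injOn _ hmaps hinj (Finset.finite_toSet _)
  rw [Set.ncard_coe_finset] at hcard
  have hIcc : ((Finset.Icc 0 K).card : ℝ) = K + 1 := by
    have := Int.card_Icc_of_le 0 K (by omega)
    rw [sub_zero] at this
    exact_mod_cast this
  calc (S.ncard : ℝ) ≤ (Finset.Icc 0 K).card := by exact_mod_cast hcard
    _ = K + 1 := hIcc
    _ ≤ 2 * G / s + 1 := by linarith [Int.floor_le (2 * G / s)]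

def line (x y : ℂ) : Set ℂ := {z : ℂ | ∃ t : ℝ, z = x + (t : ℂ) * y}

section line

variable {x y : ℂ}

lemma areaForm_ofReal_mul_self (y : ℂ) (t : ℝ) : ω y ((t : ℂ) * y) = 0 := by
  rw [← Complex.real_smul, map_smul, Orientation.areaForm_apply_self, smul_zero]

lemma mem_line_iff_areaForm_eq_zero (hy : y ≠ 0) {p : ℂ} : p ∈ line x y ↔ ω y (p - x) = 0 := by
  refine ⟨fun ⟨t, ht⟩ ↦ by rw [ht, add_sub_cancel_left, areaForm_ofReal_mul_self], fun h ↦ ?_⟩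
  rw [Complex.areaForm] at h
  have hreal : conj y * (p - x) = ((conj y * (p - x)).re : ℂ) := Complex.ext rfl (by simp [h])
  refine ⟨(conj y * (p - x)).re / Complex.normSq y, ?_⟩
  have hy' : conj y ≠ 0 := by simpa using hy
  push_cast
  rw [← hreal, Complex.normSq_eq_conj_mul_self]
  field_simp
  ring

lemma abs_areaForm_le_of_mem_epsNbhd {p : ℂ} {ε : ℝ} (h : p ∈ epsNbhd (line x y) ε) :
    |ω y (p - x)| ≤ ε * ‖y‖ := by
  obtain ⟨_, ⟨t, rfl⟩, hpq⟩ := h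
  calc |ω y (p - x)| = |ω y (p - (x + t * y))| := by
        rw [show p - x = p - (x + t * y) + t * y by ring, map_add, areaForm_ofReal_mul_self,
          add_zero]
    _ ≤ ‖y‖ * ‖p - (x + t * y)‖ := Orientation.abs_areaForm_le _ _ _
    _ ≤ ε * ‖y‖ := by rw [mul_comm]; gcongr

lemma norm_add_mul_sub_add_mul (a b : ℝ) : ‖(x + a * y) - (x + b * y)‖ = |a - b| * ‖y‖ := by
  rw [add_sub_add_left_eq_sub, ← sub_mul, norm_mul, ← Complex.ofReal_sub, Complex.norm_real,
    Real.norm_eq_abs]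

lemma ncard_near_line_le {S : Set ℂ} {N ε R : ℝ} (hN : 0 ≤ N) (hε : 0 ≤ ε)
    (hεR : 2 * ε < R) (hS : ∀ p ∈ S, ‖p‖ ≤ N) (hSL : S ⊆ epsNbhd (line x y) ε)
    (hsep : S.Pairwise fun p q ↦ R ≤ ‖p - q‖) :
    (S.ncard : ℝ) ≤ 2 * (N + ε + ‖x‖) / (R - 2 * ε) + 1 := by
  have hfoot : ∀ p ∈ S, ∃ t : ℝ, ‖p - (x + t * y)‖ ≤ ε := fun p hp ↦ by
    obtain ⟨_, ⟨t, rfl⟩, h⟩ := hSL hp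
    exact ⟨t, h⟩
  choose! t ht using hfoot
  refine ncard_le_of_separated (fun p ↦ t p * ‖y‖) (by linarith) (by positivity) ?_ ?_
  · intro p hp
    have h := norm_add_mul_sub_add_mul (x := x) (y := y) (t p) 0
    simp only [Complex.ofReal_zero, zero_mul, add_zero, sub_zero] at h
    rw [abs_mul, abs_norm, ← h]
    linarith [norm_sub_le (x + t p * y) x, norm_sub_norm_le (x + t p * y) p,
      norm_sub_rev p (x + t p * y), hS p hp, ht p hp]
  · intro p hp q hq hpq
    rw [← sub_mul, abs_mul, abs_norm, ← norm_add_mul_sub_add_mul]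
    have h := norm_sub_le_norm_sub_add_norm_sub p (x + t p * y) q
    have h' := norm_sub_le_norm_sub_add_norm_sub (x + t p * y) (x + t q * y) q
    linarith [hsep hp hq hpq, ht p hp, ht q hq, norm_sub_rev q (x + t q * y)]

lemma densEps_line_le_of_pairwise {P : Set ℂ} {ε R : ℝ} (hε : 0 ≤ ε) (hεR : 2 * ε < R)
    (hsep : (P ∩ epsNbhd (line x y) ε).Pairwise fun p q ↦ R ≤ ‖p - q‖) :
    densEps (line x y) P ε ≤ 1 / (R - 2 * ε) := by
  have hcount : ∀ᶠ N in atTop,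
      (({p : ℂ | p ∈ P ∧ ‖p‖ ≤ N ∧ ∃ q ∈ line x y, ‖p - q‖ ≤ ε}.ncard : ℝ)) ≤
        2 / (R - 2 * ε) * N + (2 * (ε + ‖x‖) / (R - 2 * ε) + 1) := by
    filter_upwards [eventually_ge_atTop 0] with N hN
    refine (ncard_near_line_le (S := {p | p ∈ P ∧ ‖p‖ ≤ N ∧ ∃ q ∈ line x y, ‖p - q‖ ≤ ε})
      hN hε hεR (fun p hp ↦ hp.2.1) (fun p hp ↦ hp.2.2) (hsep.mono ?_)).trans_eq (by ring)
    exact fun p hp ↦ ⟨hp.1, hp.2.2⟩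
  calc densEps (line x y) P ε ≤ 2 / (R - 2 * ε) / 2 :=
        limsup_div_two_mul_le (fun _ ↦ Nat.cast_nonneg _) hcount
    _ = 1 / (R - 2 * ε) := by ring

lemma dens_line_nonpos_of_pairwise {P : Set ℂ}
    (h : ∀ R > 0, ∃ ε > 0, 4 * ε ≤ R ∧
      (P ∩ epsNbhd (line x y) ε).Pairwise fun p q ↦ R ≤ ‖p - q‖) :
    dens (line x y) P ≤ 0 := by
  by_contra! hd
  set d := dens (line x y) P
  obtain ⟨ε, hε, hεR, hsep⟩ := h (4 / d) (by positivity)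
  have hεd : ε * d ≤ 1 := by
    rw [le_div_iff₀ hd] at hεR
    linarith
  have hdens := (dens_le_densEps hd hε).trans
    (densEps_line_le_of_pairwise hε.le (by linarith) hsep)
  have : 1 / (4 / d - 2 * ε) ≤ d / 2 := by
    rw [div_le_div_iff₀ (by linarith) two_pos, mul_sub, mul_div_cancel₀ _ hd.ne']
    linarith
  linarith

end line

lemma exists_pos_forall_le_dist_of_finite {X : Type*} [MetricSpace X] {s : Set X}
    (hs : s.Finite) {z : X} (hz : z ∉ s) : ∃ d > 0, ∀ p ∈ s, d ≤ dist p z := by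
  obtain ⟨d, hd, hball⟩ := Metric.isOpen_iff.mp hs.isClosed.isOpen_compl z hz
  exact ⟨d, hd, fun p hp ↦ not_lt.mp fun h ↦ hball (Metric.mem_ball.mpr h) hp⟩

section discrete

variable {E : Type*} [NormedAddCommGroup E] [ProperSpace E] (H : AddSubgroup E)
  [DiscreteTopology H]

lemma finite_closedBall_inter_of_discrete (z : E) (r : ℝ) :
    (Metric.closedBall z r ∩ H).Finite :=
  Metric.finite_isBounded_inter_isClosed DiscreteTopology.isDiscrete Metric.isBounded_closedBall
    AddSubgroup.isClosed_of_discrete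

lemma exists_pos_forall_le_dist_of_discrete (z : E) :
    ∃ d > 0, ∀ h ∈ H, h ≠ z → d ≤ dist h z := by
  obtain ⟨d, hd, hle⟩ := exists_pos_forall_le_dist_of_finite
    ((finite_closedBall_inter_of_discrete H z 1).sdiff (t := {z})) fun h ↦ h.2 rfl
  refine ⟨min d 1, by positivity, fun h hH hne ↦ ?_⟩
  by_cases h1 : dist h z ≤ 1
  · exact (min_le_left _ _).trans (hle h ⟨⟨h1, hH⟩, hne⟩)
  · exact (min_le_right _ _).trans (not_le.mp h1).le

end discrete

section coset

variable {x y z₀ : ℂ} {Λ : AddSubgroup ℂ} {P : Set ℂ}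

lemma exists_epsNbhd_inter_subset_line (hy : y ≠ 0) (hP : ∀ z, z ∈ P ↔ z - z₀ ∈ Λ) {c : ℝ}
    (hc : ∀ w ∈ Λ, ω y w ∈ AddSubgroup.zmultiples c) :
    ∃ ε₀ > 0, P ∩ epsNbhd (line x y) ε₀ ⊆ line x y := by
  obtain ⟨d, hd, hgap⟩ :=
    exists_pos_forall_le_dist_of_discrete (AddSubgroup.zmultiples c) (-ω y (z₀ - x))
  refine ⟨d / (2 * ‖y‖), by positivity, fun p ⟨hp, hnear⟩ ↦ ?_⟩
  have hsplit : ω y (p - x) = ω y (p - z₀) + ω y (z₀ - x) := by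
    rw [← map_add, sub_add_sub_cancel]
  have hsmall : |ω y (p - x)| ≤ d / 2 := by
    have := abs_areaForm_le_of_mem_epsNbhd hnear
    rwa [div_mul_eq_mul_div, mul_div_mul_right _ _ (norm_ne_zero_iff.mpr hy)] at this
  rw [mem_line_iff_areaForm_eq_zero hy]
  by_contra hne
  have hfar := hgap _ (hc _ ((hP p).mp hp)) fun h ↦ hne (by rw [hsplit, h, neg_add_cancel])
  rw [Real.dist_eq, sub_neg_eq_add, ← hsplit] at hfar
  linarith [abs_pos.mpr hne]

lemma pairwise_far_of_areaForm_ne_zero [DiscreteTopology Λ] (hy : y ≠ 0)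
    (hP : ∀ z, z ∈ P ↔ z - z₀ ∈ Λ) (hker : ∀ w ∈ Λ, w ≠ 0 → ω y w ≠ 0) {R : ℝ} (hR : 0 < R) :
    ∃ ε > 0, 4 * ε ≤ R ∧ (P ∩ epsNbhd (line x y) ε).Pairwise fun p q ↦ R ≤ ‖p - q‖ := by
  have hfin := ((finite_closedBall_inter_of_discrete Λ 0 R).sdiff (t := {0})).image (ω y)
  obtain ⟨δ, hδ, hδle⟩ := exists_pos_forall_le_dist_of_finite hfin
    fun ⟨w, ⟨⟨_, hw⟩, hw0⟩, h⟩ ↦ hker w hw hw0 h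
  refine ⟨min (R / 4) (δ / (4 * ‖y‖)), by positivity,
    by linarith [min_le_left (R / 4) (δ / (4 * ‖y‖))], ?_⟩
  rintro p ⟨hp, hpL⟩ q ⟨hq, hqL⟩ hpq
  by_contra! hlt
  have hpqΛ : p - q ∈ Λ := by
    simpa using sub_mem ((hP p).mp hp) ((hP q).mp hq)
  have hbig := hδle _ ⟨p - q, ⟨⟨by simpa using hlt.le, hpqΛ⟩, sub_ne_zero.mpr hpq⟩, rfl⟩
  have hεy : min (R / 4) (δ / (4 * ‖y‖)) * ‖y‖ ≤ δ / 4 := by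
    calc _ ≤ δ / (4 * ‖y‖) * ‖y‖ := by gcongr; exact min_le_right _ _
      _ = δ / 4 := by field_simp
  have hdiff : ω y (p - q) = ω y (p - x) - ω y (q - x) := by
    rw [← map_sub, sub_sub_sub_cancel_right]
  rw [Real.dist_eq, sub_zero, hdiff] at hbig
  linarith [abs_sub (ω y (p - x)) (ω y (q - x)), abs_areaForm_le_of_mem_epsNbhd hpL,
    abs_areaForm_le_of_mem_epsNbhd hqL]

lemma isArithSeq_line_inter (hy : y ≠ 0) (hP : ∀ z, z ∈ P ↔ z - z₀ ∈ Λ) {w₀ : ℂ}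
    (hw₀ : w₀ ≠ 0) (hker : ∀ w, w ∈ Λ ∧ ω y w = 0 ↔ w ∈ AddSubgroup.zmultiples w₀) {p₁ : ℂ}
    (hp₁ : p₁ ∈ line x y ∩ P) : IsArithSeq (line x y ∩ P) := by
  obtain ⟨hp₁L, hp₁P⟩ := hp₁
  refine ⟨p₁, w₀, hw₀, Set.ext fun z ↦ ?_⟩
  have hΛ : z ∈ P ↔ z - p₁ ∈ Λ := by
    rw [hP, ← sub_sub_sub_cancel_right z p₁ z₀]
    have hp₁Λ := (hP p₁).mp hp₁P
    exact ⟨fun h ↦ sub_mem h hp₁Λ, fun h ↦ by simpa using add_mem h hp₁Λ⟩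
  have hL : z ∈ line x y ↔ ω y (z - p₁) = 0 := by
    rw [mem_line_iff_areaForm_eq_zero hy, ← sub_add_sub_cancel z p₁ x, map_add,
      (mem_line_iff_areaForm_eq_zero hy).mp hp₁L, add_zero]
  rw [Set.mem_inter_iff, hL, hΛ, and_comm, hker, AddSubgroup.mem_zmultiples_iff]
  simp only [Set.mem_ofPred_eq, zsmul_eq_mul]
  exact exists_congr fun k ↦ eq_sub_iff_add_eq'.trans eq_comm

end coset

lemma exists_isCoprime_mul_of_int_relation {u v : ℝ} {m n : ℤ} (hmn : m ≠ 0 ∨ n ≠ 0)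
    (h : m * u + n * v = 0) : ∃ (p q : ℤ) (c : ℝ), IsCoprime p q ∧ u = p * c ∧ v = q * c := by
  obtain ⟨g, m', n', hg, hcop, rfl, rfl⟩ := Int.exists_gcd_one' (Int.gcd_pos_iff.mpr hmn)
  obtain ⟨s, t, hst⟩ := Int.isCoprime_iff_gcd_eq_one.mpr hcop
  have hst' : (s : ℝ) * m' + t * n' = 1 := by exact_mod_cast hst
  have h' : (m' : ℝ) * u + n' * v = 0 := by
    push_cast at h
    have hg' : (g : ℝ) ≠ 0 := by positivity
    apply mul_left_cancel₀ hg'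
    linear_combination h
  refine ⟨-n', m', s * v - t * u, (Int.isCoprime_iff_gcd_eq_one.mpr hcop).symm.neg_left, ?_, ?_⟩
  · push_cast
    linear_combination s * h' - u * hst'
  · linear_combination t * h' - v * hst'

lemma exists_eq_of_mul_add_mul_eq_zero {p q m n : ℤ} (hpq : IsCoprime p q)
    (h : m * p + n * q = 0) : ∃ k : ℤ, m = k * q ∧ n = -(k * p) := by
  obtain ⟨s, t, hst⟩ := hpq
  exact ⟨t * m - s * n, by linear_combination s * h - m * hst,
    by linear_combination t * h - n * hst⟩

section closurePair

variable {M : Type*} [AddCommGroup M] (f : M →+ ℝ) {e₁ e₂ : M}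

lemma exists_isCoprime_of_mem_closure_pair {w : M} (hw : w ∈ AddSubgroup.closure {e₁, e₂})
    (hw₀ : w ≠ 0) (hfw : f w = 0) :
    ∃ (p q : ℤ) (c : ℝ), IsCoprime p q ∧ f e₁ = p * c ∧ f e₂ = q * c := by
  obtain ⟨m, n, rfl⟩ := AddSubgroup.mem_closure_pair.mp hw
  refine exists_isCoprime_mul_of_int_relation (m := m) (n := n) ?_ ?_
  · by_contra! h
    simp [h] at hw₀
  · simpa [zsmul_eq_mul] using hfw

lemma map_mem_zmultiples_of_mem_closure_pair {p q : ℤ} {c : ℝ} (hp : f e₁ = p * c)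
    (hq : f e₂ = q * c) {w : M} (hw : w ∈ AddSubgroup.closure {e₁, e₂}) :
    f w ∈ AddSubgroup.zmultiples c := by
  obtain ⟨m, n, rfl⟩ := AddSubgroup.mem_closure_pair.mp hw
  refine ⟨m * p + n * q, ?_⟩
  simp only [map_add, map_zsmul, hp, hq, zsmul_eq_mul]
  push_cast
  ring

lemma zsmul_sub_zsmul_ne_zero (hli : LinearIndependent ℤ ![e₁, e₂]) {p q : ℤ}
    (hpq : IsCoprime p q) : q • e₁ - p • e₂ ≠ 0 := by
  intro h
  obtain ⟨rfl, hp⟩ :=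
    LinearIndependent.pair_iff.mp hli q (-p) (by rw [neg_smul, ← sub_eq_add_neg, h])
  rw [neg_eq_zero] at hp
  subst hp
  exact not_isCoprime_zero_zero hpq

lemma mem_closure_pair_and_eq_zero_iff {p q : ℤ} {c : ℝ} (hpq : IsCoprime p q) (hc : c ≠ 0)
    (hp : f e₁ = p * c) (hq : f e₂ = q * c) (w : M) :
    w ∈ AddSubgroup.closure {e₁, e₂} ∧ f w = 0 ↔
      w ∈ AddSubgroup.zmultiples (q • e₁ - p • e₂) := by
  constructor
  · rintro ⟨hw, hfw⟩
    obtain ⟨m, n, rfl⟩ := AddSubgroup.mem_closure_pair.mp hw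
    simp only [map_add, map_zsmul, hp, hq, zsmul_eq_mul] at hfw
    have hmn : ((m * p + n * q : ℤ) : ℝ) * c = 0 := by
      push_cast
      linear_combination hfw
    obtain ⟨k, rfl, rfl⟩ := exists_eq_of_mul_add_mul_eq_zero hpq
      (by exact_mod_cast (mul_eq_zero.mp hmn).resolve_right hc)
    exact ⟨k, by module⟩
  · rintro ⟨k, rfl⟩
    refine ⟨zsmul_mem (sub_mem (zsmul_mem (AddSubgroup.subset_closure (by simp)) _)
      (zsmul_mem (AddSubgroup.subset_closure (by simp)) _)) _, ?_⟩
    simp only [map_zsmul, map_sub, hp, hq, zsmul_eq_mul]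
    ring

end closurePair

lemma linearIndependent_lattice_basis {a b : ℝ} (ha : a ≠ 0) (hb : b ≠ 0) {β : ℂ}
    (hβ : β ≠ 0) :
    LinearIndependent ℝ ![β⁻¹ * a, β⁻¹ * (Complex.I * b)] := by
  refine LinearIndependent.pair_iff.mpr fun s t h ↦ ?_
  have h' : ((s * a : ℝ) : ℂ) + ((t * b : ℝ) : ℂ) * Complex.I = 0 := by
    rw [Complex.real_smul, Complex.real_smul] at h
    push_cast
    linear_combination β * h - (s * a + t * b * Complex.I) * mul_inv_cancel₀ hβ
  have hre := congrArg Complex.re h'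
  have him := congrArg Complex.im h'
  simp only [Complex.add_re, Complex.add_im, Complex.ofReal_re, Complex.ofReal_im,
    Complex.mul_re, Complex.mul_im, Complex.I_re, Complex.I_im] at hre him
  constructor
  · simpa [ha] using hre
  · simpa [hb] using him

lemma discreteTopology_closure_pair {e₁ e₂ : ℂ} (hli : LinearIndependent ℝ ![e₁, e₂]) :
    DiscreteTopology (AddSubgroup.closure {e₁, e₂}) := by
  have hΛ : AddSubgroup.closure {e₁, e₂} =
      (Submodule.span ℤ (Set.range (basisOfLinearIndependentOfCardEqFinrank hli
        (by simp)))).toAddSubgroup := by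
    rw [coe_basisOfLinearIndependentOfCardEqFinrank, Matrix.range_cons_cons_empty,
      Submodule.span_int_eq_addSubgroupClosure]
  rw [hΛ]
  infer_instance

lemma areaForm_ne_zero_or {e₁ e₂ y : ℂ} (hli : LinearIndependent ℝ ![e₁, e₂]) (hy : y ≠ 0) :
    ω y e₁ ≠ 0 ∨ ω y e₂ ≠ 0 := by
  by_contra! h
  have hzero : ω y = 0 := (basisOfLinearIndependentOfCardEqFinrank hli (by simp)).ext
    fun i ↦ by fin_cases i <;> simp [h]
  have hJ := Complex.orientation.areaForm_rightAngleRotation_right y y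
  rw [hzero, LinearMap.zero_apply, real_inner_self_eq_norm_sq] at hJ
  exact hy (by simpa using hJ.symm)

lemma mem_preimage_latticeZ_iff {a b : ℝ} {β γ z : ℂ} :
    z ∈ {z : ℂ | ∃ w ∈ latticeZ a b, z = β⁻¹ * (w - γ)} ↔
      z - -(β⁻¹ * γ) ∈ AddSubgroup.closure {β⁻¹ * a, β⁻¹ * (Complex.I * b)} := by
  simp only [Set.mem_ofPred_eq, latticeZ, AddSubgroup.mem_closure_pair, zsmul_eq_mul]
  constructor
  · rintro ⟨_, ⟨m, n, rfl⟩, rfl⟩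
    exact ⟨m, n, by ring⟩
  · rintro ⟨m, n, h⟩
    refine ⟨_, ⟨m, n, rfl⟩, ?_⟩
    linear_combination -h

/-- **Positive density along a line forces alignment with the lattice.** If
`P = β⁻¹ (Π − γ)` for the lattice `Π = aℤ × i bℤ` and `L` is a line with
`Δ(L, P) > 0`, then `L ∩ P` is an arithmetic sequence and every point of `P` at
distance at most `ε₀` from `L` lies on `L`, for some `ε₀ > 0`. -/
theorem line_density_lattice (a b : ℝ) (ha : 0 < a) (hb : 0 < b)
    (β γ : ℂ) (hβ : β ≠ 0) (P : Set ℂ)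
    (hP : P = {z : ℂ | ∃ w ∈ latticeZ a b, z = β⁻¹ * (w - γ)})
    (L : Set ℂ) (hL : IsLine L) (hd : 0 < dens L P) :
    IsArithSeq (L ∩ P) ∧
      ∃ ε₀ : ℝ, 0 < ε₀ ∧ ∀ p ∈ P, (∃ q ∈ L, ‖p - q‖ ≤ ε₀) → p ∈ L := by
  obtain ⟨x, y, hy, rfl⟩ := hL
  have hli := linearIndependent_lattice_basis ha.ne' hb.ne' hβ
  have := discreteTopology_closure_pair hli
  set Λ := AddSubgroup.closure {β⁻¹ * a, β⁻¹ * (Complex.I * b)}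
  have hPΛ : ∀ z, z ∈ P ↔ z - -(β⁻¹ * γ) ∈ Λ := fun z ↦ hP ▸ mem_preimage_latticeZ_iff
  by_cases hker : ∃ w ∈ Λ, w ≠ 0 ∧ ω y w = 0
  · obtain ⟨w, hw, hw₀, hyw⟩ := hker
    obtain ⟨m, n, c, hmn, hm, hn⟩ :=
      exists_isCoprime_of_mem_closure_pair (ω y).toAddMonoidHom hw hw₀ hyw
    have hc : c ≠ 0 := by
      rintro rfl
      rcases areaForm_ne_zero_or hli hy with h | h
      · exact h (hm.trans (mul_zero _))
      · exact h (hn.trans (mul_zero _))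
    obtain ⟨ε₀, hε₀, hgap⟩ := exists_epsNbhd_inter_subset_line (x := x) hy hPΛ
      fun w hw ↦ map_mem_zmultiples_of_mem_closure_pair (ω y).toAddMonoidHom hm hn hw
    obtain ⟨p₁, hp₁⟩ := inter_nonempty_of_dens_pos hd hε₀ hgap
    refine ⟨isArithSeq_line_inter hy hPΛ (zsmul_sub_zsmul_ne_zero (hli.restrict_scalars' ℤ) hmn)
      (mem_closure_pair_and_eq_zero_iff (ω y).toAddMonoidHom hmn hc hm hn) hp₁,
      ε₀, hε₀, fun p hp hnear ↦ hgap ⟨hp, hnear⟩⟩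
  · exact absurd hd (not_lt.mpr (dens_line_nonpos_of_pairwise fun R hR ↦
      pairwise_far_of_areaForm_ne_zero hy hPΛ (fun w hw hw₀ hyw ↦ hker ⟨w, hw, hw₀, hyw⟩) hR))

end NNPaper
end
end

section
/- Let Π = aℤ × ibℤ be a lattice in ℂ with a, b > 0, let β₁, β₂ ∈ ℂ\{0} and γ₁, γ₂ ∈ ℂ, and set P_j = β_j⁻¹(Π − γ_j) for j ∈ {1,2}. Suppose ℓ is a line in ℂ such that ℓ ∩ P_j = {x_j + k·y_j : k ∈ ℤ} are arithmetic sequences for j ∈ {1,2} with y₁/y₂ real and rational. Then for every c > 0 the set P_{ℓ,c} := {p ∈ P₁ ∪ P₂ : d(p, ℓ) ≤ c} is uniformly discrete, i.e., inf{|p − p'| : p, p' ∈ P_{ℓ,c}, p ≠ p'} > 0. -/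
open scoped Classical
noncomputable section
namespace NNPaper

/-! A translate `P = β⁻¹ (Π - γ)` of the lattice meets the strip `{p | d(p, L) ≤ c}` inside finitely
many cosets `f + ℤy` of the step `y` of `L ∩ P`: shifting a point of the strip by an integer
multiple of `y` lands it in a bounded, hence finite, part of `P`. Since `y₁ / y₂` is rational, `y₁`
and `y₂` are integer multiples of one `w`, so all near points of `P₁ ∪ P₂` lie in `S + ℤw` with `S`
finite. Their differences lie in `(S - S) + ℤw`, which has only finitely many points in the unit
ball, so its nonzero elements have norm bounded away from `0`. -/

open Set Bornology Metric AddSubgroup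
open scoped Pointwise

section LocallyFinite

variable {E : Type*} [NormedAddCommGroup E]

def IsLocallyFinite (s : Set E) : Prop :=
  ∀ ⦃B : Set E⦄, IsBounded B → (s ∩ B).Finite

theorem IsLocallyFinite.exists_pos_le_norm {s : Set E} (hs : IsLocallyFinite s) :
    ∃ δ > 0, ∀ v ∈ s, v ≠ 0 → δ ≤ ‖v‖ := by
  set T := (s ∩ closedBall 0 1) \ {0}
  have hT : (Tᶜ : Set E) ∈ nhds 0 :=
    ((hs isBounded_closedBall).sdiff.isClosed.isOpen_compl).mem_nhds fun h => h.2 rfl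
  obtain ⟨ε, hε, hball⟩ := Metric.mem_nhds_iff.mp hT
  refine ⟨min ε 1, lt_min hε one_pos, fun v hv hv0 => ?_⟩
  by_contra! hlt
  have hv1 : ‖v‖ ≤ 1 := (hlt.trans_le (min_le_right _ _)).le
  have hvε : v ∈ ball (0 : E) ε := mem_ball_zero_iff.mpr (hlt.trans_le (min_le_left _ _))
  exact hball hvε ⟨⟨hv, mem_closedBall_zero_iff.mpr hv1⟩, hv0⟩

theorem IsLocallyFinite.finite_add {S s : Set E} (hs : IsLocallyFinite s) (hS : S.Finite) :
    IsLocallyFinite (S + s) := by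
  intro B hB
  refine (hS.add (hs (isBounded_sub hB hS.isBounded))).subset ?_
  rintro _ ⟨⟨u, hu, v, hv, rfl⟩, huv⟩
  exact ⟨u, hu, v, ⟨hv, u + v, huv, u, hu, add_sub_cancel_left u v⟩, rfl⟩

theorem IsLocallyFinite.image_of_antilipschitz {F : Type*} [NormedAddCommGroup F] {s : Set E}
    (hs : IsLocallyFinite s) {K : NNReal} {f : E → F} (hf : AntilipschitzWith K f) :
    IsLocallyFinite (f '' s) := by
  intro B hB
  refine ((hs (hf.isBounded_preimage hB)).image f).subset ?_
  rintro _ ⟨⟨v, hv, rfl⟩, hvB⟩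
  exact ⟨v, ⟨hv, hvB⟩, rfl⟩

theorem isLocallyFinite_zmultiples [NormedSpace ℚ E] [ProperSpace E] (w : E) :
    IsLocallyFinite (zmultiples w : Set E) := fun _ hB =>
  finite_isBounded_inter_isClosed
    (isDiscrete_iff_discreteTopology.mpr (NormedSpace.discreteTopology_zmultiples w)) hB
    AddSubgroup.isClosed_of_discrete |>.subset (inter_comm _ _).le

theorem exists_pos_le_norm_sub_of_mem_finite_add_zmultiples [NormedSpace ℚ E] [ProperSpace E]
    {S : Set E} (hS : S.Finite) (w : E) :
    ∃ δ > 0, ∀ p ∈ S + zmultiples w, ∀ p' ∈ S + zmultiples w, p ≠ p' → δ ≤ ‖p - p'‖ := by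
  obtain ⟨δ, hδ, hgap⟩ :=
    ((isLocallyFinite_zmultiples w).finite_add (hS.sub hS)).exists_pos_le_norm
  refine ⟨δ, hδ, ?_⟩
  rintro _ ⟨s, hs, u, hu, rfl⟩ _ ⟨s', hs', u', hu', rfl⟩ hne
  exact hgap _ ⟨s - s', ⟨s, hs, s', hs', rfl⟩, u - u', sub_mem hu hu',
    (add_sub_add_comm s u s' u').symm⟩ (sub_ne_zero.mpr hne)

theorem exists_finite_mem_add_zmultiples_of_norm_sub_smul_le [NormedSpace ℝ E]
    {Λ : AddSubgroup E} (hΛ : IsLocallyFinite (Λ : Set E)) {y : E} (hy : y ∈ Λ) (c : ℝ) :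
    ∃ F : Set E, F.Finite ∧ ∀ v ∈ Λ, ∀ t : ℝ, ‖v - t • y‖ ≤ c → v ∈ F + zmultiples y := by
  refine ⟨Λ ∩ closedBall 0 (c + ‖y‖), hΛ isBounded_closedBall, fun v hv t hvt => ?_⟩
  refine ⟨v - ⌊t⌋ • y, ⟨sub_mem hv (zsmul_mem hy _), ?_⟩, ⌊t⌋ • y, zsmul_mem_zmultiples y _,
    sub_add_cancel v _⟩
  have hfract : ‖Int.fract t • y‖ ≤ ‖y‖ := by
    rw [norm_smul, Real.norm_of_nonneg (Int.fract_nonneg t)]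
    exact mul_le_of_le_one_left (norm_nonneg y) (Int.fract_lt_one t).le
  rw [mem_closedBall_zero_iff]
  calc ‖v - ⌊t⌋ • y‖ = ‖(v - t • y) + Int.fract t • y‖ := by
        rw [Int.fract, sub_smul, ← Int.cast_smul_eq_zsmul ℝ]; congr 1; abel
    _ ≤ c + ‖y‖ := (norm_add_le _ _).trans (add_le_add hvt hfract)

end LocallyFinite

def latticeAddSubgroup (a b : ℝ) : AddSubgroup ℂ where
  carrier := latticeZ a b
  add_mem' := by
    rintro _ _ ⟨m, n, rfl⟩ ⟨m', n', rfl⟩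
    exact ⟨m + m', n + n', by push_cast; ring⟩
  zero_mem' := ⟨0, 0, by simp⟩
  neg_mem' := by
    rintro _ ⟨m, n, rfl⟩
    exact ⟨-m, -n, by push_cast; ring⟩

def latticeTranslate (a b : ℝ) (β γ : ℂ) : Set ℂ :=
  {z : ℂ | ∃ w ∈ latticeZ a b, z = β⁻¹ * (w - γ)}

theorem isLocallyFinite_latticeZ (a b : ℝ) : IsLocallyFinite (latticeZ a b) := by
  intro B hB
  obtain ⟨R, hR⟩ := hB.subset_closedBall 0
  have hball : IsBounded (closedBall (0 : ℂ) R) := isBounded_closedBall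
  refine ((isLocallyFinite_zmultiples (a : ℂ) hball).add
    (isLocallyFinite_zmultiples (Complex.I * b) hball)).subset ?_
  rintro _ ⟨⟨m, n, rfl⟩, hzB⟩
  have hz := mem_closedBall_zero_iff.mp (hR hzB)
  refine ⟨(a : ℂ) * m, ⟨mem_zmultiples_iff.mpr ⟨m, by rw [zsmul_eq_mul, mul_comm]⟩, ?_⟩,
    Complex.I * (b * n), ⟨mem_zmultiples_iff.mpr ⟨n, by rw [zsmul_eq_mul]; ring⟩, ?_⟩, rfl⟩
  · rw [mem_closedBall_zero_iff]
    calc ‖(a : ℂ) * m‖ = |((a : ℂ) * m + Complex.I * (b * n)).re| := by simp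
      _ ≤ R := (Complex.abs_re_le_norm _).trans hz
  · rw [mem_closedBall_zero_iff]
    calc ‖Complex.I * (b * n)‖ = |((a : ℂ) * m + Complex.I * (b * n)).im| := by simp
      _ ≤ R := (Complex.abs_im_le_norm _).trans hz

theorem isLocallyFinite_map_mulLeft_latticeAddSubgroup (a b : ℝ) {β : ℂ} (hβ : β ≠ 0) :
    IsLocallyFinite ((latticeAddSubgroup a b).map (AddMonoidHom.mulLeft β⁻¹) : Set ℂ) := by
  rw [AddSubgroup.coe_map]
  refine (isLocallyFinite_latticeZ a b).image_of_antilipschitz (K := ‖β‖₊)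
    (AntilipschitzWith.of_le_mul_dist fun z z' => ?_)
  simp only [AddMonoidHom.coe_mulLeft, dist_eq_norm, coe_nnnorm, ← mul_sub, norm_mul, norm_inv]
  rw [mul_inv_cancel_left₀ (norm_ne_zero_iff.mpr hβ)]

theorem sub_mem_map_mulLeft_of_mem_latticeTranslate {a b : ℝ} {β γ p p' : ℂ}
    (hp : p ∈ latticeTranslate a b β γ) (hp' : p' ∈ latticeTranslate a b β γ) :
    p - p' ∈ (latticeAddSubgroup a b).map (AddMonoidHom.mulLeft β⁻¹) := by
  obtain ⟨w, hw, rfl⟩ := hp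
  obtain ⟨w', hw', rfl⟩ := hp'
  refine ⟨w - w', sub_mem (show w ∈ latticeAddSubgroup a b from hw) hw', ?_⟩
  simp only [AddMonoidHom.coe_mulLeft]
  ring

theorem IsLine.exists_eq_add_mul {L : Set ℂ} (hL : IsLine L) {p v : ℂ} (hv : v ≠ 0)
    (hp : p ∈ L) (hpv : p + v ∈ L) {z : ℂ} (hz : z ∈ L) : ∃ t : ℝ, z = p + t * v := by
  obtain ⟨x, y, -, rfl⟩ := hL
  obtain ⟨t₀, rfl⟩ := hp
  obtain ⟨t₁, ht₁⟩ := hpv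
  obtain ⟨t, rfl⟩ := hz
  have hv_eq : v = ((t₁ - t₀ : ℝ) : ℂ) * y := by push_cast; linear_combination ht₁
  have ht : t₁ - t₀ ≠ 0 := fun h => hv (by simpa [h] using hv_eq)
  refine ⟨(t - t₀) / (t₁ - t₀), ?_⟩
  rw [hv_eq, ← mul_assoc, ← Complex.ofReal_mul, div_mul_cancel₀ _ ht]
  push_cast; ring

theorem exists_mem_zmultiples_of_div_eq_ratCast {K : Type*} [Field K] [CharZero K] {y₁ y₂ : K}
    (hy₂ : y₂ ≠ 0) (h : ∃ q : ℚ, y₁ / y₂ = q) :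
    ∃ w : K, y₁ ∈ zmultiples w ∧ y₂ ∈ zmultiples w := by
  obtain ⟨q, hq⟩ := h
  have hden : (q.den : K) ≠ 0 := Nat.cast_ne_zero.mpr q.den_nz
  refine ⟨y₂ / q.den, mem_zmultiples_iff.mpr ⟨q.num, ?_⟩, mem_zmultiples_iff.mpr ⟨q.den, ?_⟩⟩
  · rw [div_eq_iff hy₂] at hq
    rw [hq, zsmul_eq_mul, Rat.cast_def]; field_simp
  · rw [natCast_zsmul, nsmul_eq_mul]; field_simp

theorem exists_finite_near_line_subset_add_zmultiples (a b : ℝ) {β γ : ℂ} (hβ : β ≠ 0)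
    {L : Set ℂ} (hL : IsLine L) {x y : ℂ} (hy : y ≠ 0)
    (hseq : L ∩ latticeTranslate a b β γ = {z : ℂ | ∃ k : ℤ, z = x + (k : ℂ) * y}) (c : ℝ) :
    ∃ F : Set ℂ, F.Finite ∧
      latticeTranslate a b β γ ∩ {p | infDist p L ≤ c} ⊆ F + zmultiples y := by
  have hx : x ∈ L ∩ latticeTranslate a b β γ := hseq ▸ ⟨0, by simp⟩
  have hxy : x + y ∈ L ∩ latticeTranslate a b β γ := hseq ▸ ⟨1, by simp⟩
  have hyΛ := sub_mem_map_mulLeft_of_mem_latticeTranslate hxy.2 hx.2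
  rw [add_sub_cancel_left] at hyΛ
  obtain ⟨F, hF, hnear⟩ := exists_finite_mem_add_zmultiples_of_norm_sub_smul_le
    (isLocallyFinite_map_mulLeft_latticeAddSubgroup a b hβ) hyΛ (c + 1)
  refine ⟨{x} + F, (finite_singleton x).add hF, fun p ⟨hp, hpc⟩ => ?_⟩
  obtain ⟨z, hzL, hpz⟩ := (infDist_lt_iff ⟨x, hx.1⟩).mp (hpc.trans_lt (lt_add_one c))
  obtain ⟨t, rfl⟩ := hL.exists_eq_add_mul hy hx.1 hxy.1 hzL
  have hdist : ‖(p - x) - t • y‖ ≤ c + 1 := by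
    rw [Complex.real_smul, sub_sub, ← dist_eq_norm]; exact hpz.le
  obtain ⟨f, hf, u, hu, hfu⟩ :=
    hnear _ (sub_mem_map_mulLeft_of_mem_latticeTranslate hp hx.2) t hdist
  refine ⟨x + f, ⟨x, mem_singleton x, f, hf, rfl⟩, u, hu, ?_⟩
  dsimp only at hfu ⊢
  rw [add_assoc, hfu, add_sub_cancel]

theorem two_lattice_uniformly_discrete_general (a b : ℝ)
    (β₁ β₂ γ₁ γ₂ : ℂ) (hβ₁ : β₁ ≠ 0) (hβ₂ : β₂ ≠ 0) (P₁ P₂ : Set ℂ)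
    (hP₁ : P₁ = {z : ℂ | ∃ w ∈ latticeZ a b, z = β₁⁻¹ * (w - γ₁)})
    (hP₂ : P₂ = {z : ℂ | ∃ w ∈ latticeZ a b, z = β₂⁻¹ * (w - γ₂)})
    (L : Set ℂ) (hL : IsLine L)
    (x₁ y₁ x₂ y₂ : ℂ) (hy₁ : y₁ ≠ 0) (hy₂ : y₂ ≠ 0)
    (hseq₁ : L ∩ P₁ = {z : ℂ | ∃ k : ℤ, z = x₁ + (k : ℂ) * y₁})
    (hseq₂ : L ∩ P₂ = {z : ℂ | ∃ k : ℤ, z = x₂ + (k : ℂ) * y₂})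
    (hrat : ∃ q : ℚ, y₁ / y₂ = (q : ℂ)) :
    ∀ c : ℝ, 0 < c → ∃ δ : ℝ, 0 < δ ∧
      ∀ p ∈ (P₁ ∪ P₂) ∩ {p : ℂ | Metric.infDist p L ≤ c},
        ∀ p' ∈ (P₁ ∪ P₂) ∩ {p : ℂ | Metric.infDist p L ≤ c},
          p ≠ p' → δ ≤ ‖p - p'‖ := by
  intro c _
  subst hP₁ hP₂
  obtain ⟨F₁, hF₁, hnear₁⟩ :=
    exists_finite_near_line_subset_add_zmultiples a b (γ := γ₁) hβ₁ hL hy₁ hseq₁ c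
  obtain ⟨F₂, hF₂, hnear₂⟩ :=
    exists_finite_near_line_subset_add_zmultiples a b (γ := γ₂) hβ₂ hL hy₂ hseq₂ c
  obtain ⟨w, hy₁w, hy₂w⟩ := exists_mem_zmultiples_of_div_eq_ratCast hy₂ hrat
  obtain ⟨δ, hδ, hsep⟩ := exists_pos_le_norm_sub_of_mem_finite_add_zmultiples (hF₁.union hF₂) w
  have hcover : (latticeTranslate a b β₁ γ₁ ∪ latticeTranslate a b β₂ γ₂) ∩ {p | infDist p L ≤ c} ⊆
      (F₁ ∪ F₂) + zmultiples w := by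
    rintro p ⟨hp₁ | hp₂, hpc⟩
    · exact add_subset_add subset_union_left (zmultiples_le.mpr hy₁w) (hnear₁ ⟨hp₁, hpc⟩)
    · exact add_subset_add subset_union_right (zmultiples_le.mpr hy₂w) (hnear₂ ⟨hp₂, hpc⟩)
  exact ⟨δ, hδ, fun p hp p' hp' => hsep p (hcover hp) p' (hcover hp')⟩

/-- **Uniform discreteness of two commensurate lattice translates near a line.** If
`P_j = β_j⁻¹ (Π − γ_j)` for the lattice `Π = aℤ × i bℤ` and a line `L` intersects
`P₁` and `P₂` in arithmetic sequences with steps `y₁`, `y₂` such that `y₁ / y₂` is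
real and rational, then, for every `c > 0`, the set of points of `P₁ ∪ P₂` at
distance at most `c` from `L` is uniformly discrete. -/
theorem two_lattice_uniformly_discrete (a b : ℝ) (ha : 0 < a) (hb : 0 < b)
    (β₁ β₂ γ₁ γ₂ : ℂ) (hβ₁ : β₁ ≠ 0) (hβ₂ : β₂ ≠ 0) (P₁ P₂ : Set ℂ)
    (hP₁ : P₁ = {z : ℂ | ∃ w ∈ latticeZ a b, z = β₁⁻¹ * (w - γ₁)})
    (hP₂ : P₂ = {z : ℂ | ∃ w ∈ latticeZ a b, z = β₂⁻¹ * (w - γ₂)})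
    (L : Set ℂ) (hL : IsLine L)
    (x₁ y₁ x₂ y₂ : ℂ) (hy₁ : y₁ ≠ 0) (hy₂ : y₂ ≠ 0)
    (hseq₁ : L ∩ P₁ = {z : ℂ | ∃ k : ℤ, z = x₁ + (k : ℂ) * y₁})
    (hseq₂ : L ∩ P₂ = {z : ℂ | ∃ k : ℤ, z = x₂ + (k : ℂ) * y₂})
    (hrat : ∃ q : ℚ, y₁ / y₂ = (q : ℂ)) :
    ∀ c : ℝ, 0 < c → ∃ δ : ℝ, 0 < δ ∧
      ∀ p ∈ (P₁ ∪ P₂) ∩ {p : ℂ | Metric.infDist p L ≤ c},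
        ∀ p' ∈ (P₁ ∪ P₂) ∩ {p : ℂ | Metric.infDist p L ≤ c},
          p ≠ p' → δ ≤ ‖p - p'‖ :=
  two_lattice_uniformly_discrete_general a b β₁ β₂ γ₁ γ₂ hβ₁ hβ₂ P₁ P₂ hP₁ hP₂ L hL x₁ y₁ x₂ y₂ hy₁
    hy₂ hseq₁ hseq₂ hrat

end NNPaper
end
end
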